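/- arXiv:1503.09165 — 8 statements merged into one kernel-verified Lean document; each statement's English description precedes it below -/
import Mathlib

section
/- Let (X_n) be a Markov chain on finite X with kernel K and stationary distribution π, π_0 the initial distribution. Let T be the randomized stopping time T = inf{n ≥ 0 : U_n ≤ ψ_n(X_n)}, where (U_n) are i.i.d. uniform on [0,1] independent of the chain, ψ_n(x) = γ_n(x)/Δ_n(x) when Δ_n(x) ≠ 0 and ψ_n(x) = 1 otherwise. Then for all n ≥ 0 and x ∈ X: P(X_n = x, T ≥ n) = Δ_n(x), P(X_n = x, T = n) = γ_n(x), and P(T > n) = ‖π_n - π‖_TV. -/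
open Matrix Finset

/-- `Δ_0 = π_0`, `Δ_{n+1} = π_{n+1} - (π_n ∧ π)K`. -/
noncomputable def Delta {m : ℕ} (K : Matrix (Fin m) (Fin m) ℝ) (π0 π : Fin m → ℝ) :
    ℕ → Fin m → ℝ
  | 0 => π0
  | (n+1) => fun x => (π0 ᵥ* K ^ (n+1)) x - ∑ y, min ((π0 ᵥ* K ^ n) y) (π y) * K y x

/-- `γ_0 = π_0 ∧ π`, `γ_n = (π_n ∧ π) - (π_{n-1} ∧ π)K` for `n ≥ 1`. -/
noncomputable def gam {m : ℕ} (K : Matrix (Fin m) (Fin m) ℝ) (π0 π : Fin m → ℝ) :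
    ℕ → Fin m → ℝ
  | 0 => fun x => min (π0 x) (π x)
  | (n+1) => fun x =>
      min ((π0 ᵥ* K ^ (n+1)) x) (π x) - ∑ y, min ((π0 ᵥ* K ^ n) y) (π y) * K y x

/-- `ψ_n(x) = γ_n(x)/Δ_n(x)` when `Δ_n(x) ≠ 0`, and `1` otherwise. -/
noncomputable def psi {m : ℕ} (K : Matrix (Fin m) (Fin m) ℝ) (π0 π : Fin m → ℝ)
    (n : ℕ) (x : Fin m) : ℝ :=
  if Delta K π0 π n x ≠ 0 then gam K π0 π n x / Delta K π0 π n x else 1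

variable {m : ℕ} (K : Matrix (Fin m) (Fin m) ℝ) (π0 π : Fin m → ℝ)

lemma pik_apply (n : ℕ) (x : Fin m) :
    (π0 ᵥ* K ^ (n+1)) x = ∑ y, (π0 ᵥ* K ^ n) y * K y x := by
  rw [pow_succ, ← vecMul_vecMul]
  rfl

lemma pik_nonneg (hK0 : ∀ x y, 0 ≤ K x y) (hπ00 : ∀ x, 0 ≤ π0 x) :
    ∀ (n : ℕ) (x : Fin m), 0 ≤ (π0 ᵥ* K ^ n) x := by
  intro n
  induction n with
  | zero => simpa using hπ00
  | succ n ih =>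
    intro x
    rw [pik_apply]
    exact Finset.sum_nonneg fun y _ => mul_nonneg (ih y) (hK0 y x)

lemma pik_sum (hK1 : ∀ x, ∑ y, K x y = 1) (hπ01 : ∑ x, π0 x = 1) :
    ∀ n : ℕ, ∑ x, (π0 ᵥ* K ^ n) x = 1 := by
  intro n
  induction n with
  | zero => simpa using hπ01
  | succ n ih =>
    simp only [pik_apply]
    rw [Finset.sum_comm]
    simp only [← Finset.mul_sum, hK1, mul_one, ih]

lemma gam_nonneg (hK0 : ∀ x y, 0 ≤ K x y) (hK1 : ∀ x, ∑ y, K x y = 1)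
    (hπ00 : ∀ x, 0 ≤ π0 x) (hπpos : ∀ x, 0 < π x) (hstat : π ᵥ* K = π) :
    ∀ (n : ℕ) (x : Fin m), 0 ≤ gam K π0 π n x := by
  intro n x
  cases n with
  | zero => exact le_min (hπ00 x) (hπpos x).le
  | succ n =>
    simp only [gam, sub_nonneg, le_min_iff]
    constructor
    · rw [pik_apply]
      exact Finset.sum_le_sum fun y _ =>
        mul_le_mul_of_nonneg_right (min_le_left _ _) (hK0 y x)
    · calc ∑ y, min ((π0 ᵥ* K ^ n) y) (π y) * K y x
          ≤ ∑ y, π y * K y x :=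
            Finset.sum_le_sum fun y _ =>
              mul_le_mul_of_nonneg_right (min_le_right _ _) (hK0 y x)
        _ = (π ᵥ* K) x := rfl
        _ = π x := by rw [hstat]

lemma Delta_sub_gam (n : ℕ) (x : Fin m) :
    Delta K π0 π n x - gam K π0 π n x
      = (π0 ᵥ* K ^ n) x - min ((π0 ᵥ* K ^ n) x) (π x) := by
  cases n with
  | zero => simp [Delta, gam]
  | succ n => simp only [Delta, gam]; ring

lemma Delta_mul_psi (hK0 : ∀ x y, 0 ≤ K x y) (hK1 : ∀ x, ∑ y, K x y = 1)
    (hπ00 : ∀ x, 0 ≤ π0 x) (hπpos : ∀ x, 0 < π x) (hstat : π ᵥ* K = π)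
    (n : ℕ) (x : Fin m) :
    Delta K π0 π n x * psi K π0 π n x = gam K π0 π n x := by
  unfold psi
  by_cases h : Delta K π0 π n x = 0
  · simp only [h, ne_eq, not_true_eq_false, if_false]
    have h1 : gam K π0 π n x ≤ 0 := by
      have := Delta_sub_gam K π0 π n x
      have h2 : min ((π0 ᵥ* K ^ n) x) (π x) ≤ (π0 ᵥ* K ^ n) x := min_le_left _ _
      linarith
    have h2 := gam_nonneg K π0 π hK0 hK1 hπ00 hπpos hstat n x
    linarith [le_antisymm h1 h2]
  · rw [if_pos h, mul_div_cancel₀ _ h]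

lemma sum_traj (hK0 : ∀ x y, 0 ≤ K x y) (hK1 : ∀ x, ∑ y, K x y = 1)
    (hπ00 : ∀ x, 0 ≤ π0 x) (hπpos : ∀ x, 0 < π x) (hstat : π ᵥ* K = π) :
    ∀ (n : ℕ) (x : Fin m),
      (∑ f : Fin (n+1) → Fin m,
        if f (Fin.last n) = x then
          π0 (f 0) * (∏ k : Fin n, K (f k.castSucc) (f k.succ))
            * (∏ k : Fin n, (1 - psi K π0 π k.1 (f k.castSucc)))
        else 0) = Delta K π0 π n x := by
  intro n
  induction n with
  | zero =>
    intro x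
    rw [← ((Equiv.funUnique (Fin 1) (Fin m)).symm.sum_comp
      (fun f : Fin 1 → Fin m => if f (Fin.last 0) = x then
          π0 (f 0) * (∏ k : Fin 0, K (f k.castSucc) (f k.succ))
            * (∏ k : Fin 0, (1 - psi K π0 π k.1 (f k.castSucc)))
        else 0))]
    simp [Delta, Finset.sum_ite_eq']
  | succ n ih =>
    intro x
    rw [← ((Fin.snocEquiv (fun _ : Fin (n+2) => Fin m)).sum_comp
      (fun f : Fin (n+2) → Fin m => if f (Fin.last (n+1)) = x then
          π0 (f 0) * (∏ k : Fin (n+1), K (f k.castSucc) (f k.succ))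
            * (∏ k : Fin (n+1), (1 - psi K π0 π k.1 (f k.castSucc)))
        else 0))]
    rw [Fintype.sum_prod_type]
    have key : ∀ (y : Fin m) (g : Fin (n+1) → Fin m),
        (if (Fin.snocEquiv (fun _ : Fin (n+2) => Fin m)) (y, g) (Fin.last (n+1)) = x then
          π0 ((Fin.snocEquiv (fun _ : Fin (n+2) => Fin m)) (y, g) 0)
            * (∏ k : Fin (n+1), K ((Fin.snocEquiv (fun _ : Fin (n+2) => Fin m)) (y, g) k.castSucc)
                ((Fin.snocEquiv (fun _ : Fin (n+2) => Fin m)) (y, g) k.succ))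
            * (∏ k : Fin (n+1), (1 - psi K π0 π k.1
                ((Fin.snocEquiv (fun _ : Fin (n+2) => Fin m)) (y, g) k.castSucc)))
        else 0)
        = if y = x then
            (π0 (g 0) * (∏ k : Fin n, K (g k.castSucc) (g k.succ))
              * (∏ k : Fin n, (1 - psi K π0 π k.1 (g k.castSucc))))
            * ((1 - psi K π0 π n (g (Fin.last n))) * K (g (Fin.last n)) y)
          else 0 := by
      intro y g
      have h0 : (Fin.snoc g y : Fin (n+2) → Fin m) 0 = g 0 := by
        rw [show (0 : Fin (n+2)) = Fin.castSucc 0 by simp, Fin.snoc_castSucc]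
      simp only [Fin.snocEquiv_apply, Fin.snoc_last, Fin.prod_univ_castSucc,
        Fin.succ_castSucc, Fin.snoc_castSucc, Fin.succ_last, Fin.coe_castSucc,
        Fin.val_last, h0]
      split <;> ring
    simp only [key]
    have pull : ∀ y : Fin m,
        (∑ g : Fin (n+1) → Fin m, if y = x then
            (π0 (g 0) * (∏ k : Fin n, K (g k.castSucc) (g k.succ))
              * (∏ k : Fin n, (1 - psi K π0 π k.1 (g k.castSucc))))
            * ((1 - psi K π0 π n (g (Fin.last n))) * K (g (Fin.last n)) y)
          else 0)
        = if y = x then (∑ g : Fin (n+1) → Fin m,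
            (π0 (g 0) * (∏ k : Fin n, K (g k.castSucc) (g k.succ))
              * (∏ k : Fin n, (1 - psi K π0 π k.1 (g k.castSucc))))
            * ((1 - psi K π0 π n (g (Fin.last n))) * K (g (Fin.last n)) y)) else 0 := by
      intro y; split <;> simp
    simp only [pull]
    rw [Finset.sum_ite_eq' Finset.univ x]
    simp only [Finset.mem_univ, if_true]
    have expand : ∀ g : Fin (n+1) → Fin m,
        (π0 (g 0) * (∏ k : Fin n, K (g k.castSucc) (g k.succ))
              * (∏ k : Fin n, (1 - psi K π0 π k.1 (g k.castSucc))))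
            * ((1 - psi K π0 π n (g (Fin.last n))) * K (g (Fin.last n)) x)
        = ∑ z : Fin m, (if g (Fin.last n) = z then
            π0 (g 0) * (∏ k : Fin n, K (g k.castSucc) (g k.succ))
              * (∏ k : Fin n, (1 - psi K π0 π k.1 (g k.castSucc))) else 0)
            * ((1 - psi K π0 π n z) * K z x) := by
      intro g
      simp only [ite_mul, zero_mul]
      rw [Finset.sum_ite_eq Finset.univ (g (Fin.last n))]
      simp
    simp only [expand]
    rw [Finset.sum_comm]
    simp only [← Finset.sum_mul, ih]
    have final : ∀ z : Fin m,
        Delta K π0 π n z * ((1 - psi K π0 π n z) * K z x)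
        = ((π0 ᵥ* K ^ n) z - min ((π0 ᵥ* K ^ n) z) (π z)) * K z x := by
      intro z
      have h1 : Delta K π0 π n z * (1 - psi K π0 π n z)
          = Delta K π0 π n z - gam K π0 π n z := by
        rw [mul_sub, mul_one, Delta_mul_psi K π0 π hK0 hK1 hπ00 hπpos hstat]
      rw [← mul_assoc, h1, Delta_sub_gam]
    simp only [final]
    simp only [sub_mul, Finset.sum_sub_distrib]
    show (∑ z, (π0 ᵥ* K ^ n) z * K z x) - _ = Delta K π0 π (n+1) x
    rw [← pik_apply]
    rfl

/-- for the randomized stopping time `T = inf{n : U_n ≤ ψ_n(X_n)}`,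
`P(X_n = x, T ≥ n) = Δ_n(x)`, `P(X_n = x, T = n) = γ_n(x)` and `P(T > n) = ‖π_n - π‖_TV`.
The probabilities are written as the corresponding explicit sums over trajectories
`f : Fin (n+1) → X` of the chain, weighted by the survival factors `1 - ψ_k(X_k)`
coming from the independent uniform variables `U_k`. -/
theorem stmt2 {m : ℕ} (K : Matrix (Fin m) (Fin m) ℝ) (π0 π : Fin m → ℝ)
    (hK0 : ∀ x y, 0 ≤ K x y) (hK1 : ∀ x, ∑ y, K x y = 1)
    (hπ00 : ∀ x, 0 ≤ π0 x) (hπ01 : ∑ x, π0 x = 1)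
    (hπpos : ∀ x, 0 < π x) (hπ1 : ∑ x, π x = 1)
    (hstat : π ᵥ* K = π) :
    ∀ (n : ℕ) (x : Fin m),
      -- P(X_n = x, T ≥ n) = Δ_n(x)
      (∑ f : Fin (n+1) → Fin m,
        if f (Fin.last n) = x then
          π0 (f 0) * (∏ k : Fin n, K (f k.castSucc) (f k.succ))
            * (∏ k : Fin n, (1 - psi K π0 π k.1 (f k.castSucc)))
        else 0) = Delta K π0 π n x
      ∧
      -- P(X_n = x, T = n) = γ_n(x)
      (∑ f : Fin (n+1) → Fin m,
        if f (Fin.last n) = x then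
          π0 (f 0) * (∏ k : Fin n, K (f k.castSucc) (f k.succ))
            * (∏ k : Fin n, (1 - psi K π0 π k.1 (f k.castSucc)))
        else 0) * psi K π0 π n x = gam K π0 π n x
      ∧
      -- P(T > n) = ‖π_n - π‖_TV
      (∑ f : Fin (n+1) → Fin m,
        π0 (f 0) * (∏ k : Fin n, K (f k.castSucc) (f k.succ))
          * (∏ k : Fin (n+1), (1 - psi K π0 π k.1 (f k))))
        = (1/2) * ∑ y, |(π0 ᵥ* K ^ n) y - π y| := by
  
  intro n x
  refine ⟨sum_traj K π0 π hK0 hK1 hπ00 hπpos hstat n x, ?_, ?_⟩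
  · rw [sum_traj K π0 π hK0 hK1 hπ00 hπpos hstat n x]
    exact Delta_mul_psi K π0 π hK0 hK1 hπ00 hπpos hstat n x
  · have hsplit : ∀ f : Fin (n+1) → Fin m,
        π0 (f 0) * (∏ k : Fin n, K (f k.castSucc) (f k.succ))
          * (∏ k : Fin (n+1), (1 - psi K π0 π k.1 (f k)))
        = ∑ z : Fin m, (if f (Fin.last n) = z then
            π0 (f 0) * (∏ k : Fin n, K (f k.castSucc) (f k.succ))
              * (∏ k : Fin n, (1 - psi K π0 π k.1 (f k.castSucc))) else 0)
            * (1 - psi K π0 π n z) := by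
      intro f
      simp only [ite_mul, zero_mul]
      rw [Finset.sum_ite_eq Finset.univ (f (Fin.last n))]
      simp only [Finset.mem_univ, if_true]
      rw [Fin.prod_univ_castSucc (fun k : Fin (n+1) => (1 - psi K π0 π k.1 (f k)))]
      simp only [Fin.coe_castSucc, Fin.val_last]
      ring
    simp only [hsplit]
    rw [Finset.sum_comm]
    simp only [← Finset.sum_mul, sum_traj K π0 π hK0 hK1 hπ00 hπpos hstat n]
    have h1 : ∀ z, Delta K π0 π n z * (1 - psi K π0 π n z)
        = (π0 ᵥ* K ^ n) z - min ((π0 ᵥ* K ^ n) z) (π z) := by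
      intro z
      rw [mul_sub, mul_one, Delta_mul_psi K π0 π hK0 hK1 hπ00 hπpos hstat, Delta_sub_gam]
    simp only [h1]
    have h2 : ∀ z, (π0 ᵥ* K ^ n) z - min ((π0 ᵥ* K ^ n) z) (π z)
        = (((π0 ᵥ* K ^ n) z - π z) + |(π0 ᵥ* K ^ n) z - π z|) / 2 := by
      intro z
      rcases le_total ((π0 ᵥ* K ^ n) z) (π z) with h | h
      · rw [min_eq_left h, abs_of_nonpos (by linarith)]; ring
      · rw [min_eq_right h, abs_of_nonneg (by linarith)]; ring
    simp only [h2]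
    have h3 : ∑ z, ((π0 ᵥ* K ^ n) z - π z) = 0 := by
      rw [Finset.sum_sub_distrib, pik_sum K π0 hK1 hπ01 n, hπ1]; ring
    rw [show (∑ z, ((((π0 ᵥ* K ^ n) z - π z) + |(π0 ᵥ* K ^ n) z - π z|) / 2))
        = ((∑ z, ((π0 ᵥ* K ^ n) z - π z)) + ∑ z, |(π0 ᵥ* K ^ n) z - π z|) / 2 by
      rw [← Finset.sum_add_distrib, ← Finset.sum_div]]
    rw [h3]
    ring
end

section
/- Let M = {x ∈ X : π_n(x) ≤ π(x) for all n ≥ 0}. Then M is a halting set: for all n ≥ 0, ‖π_n - π‖_TV ≤ P(T_M > n), where T_M is the hitting time of M by the chain (X_n). -/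
open Matrix Finset Classical

/-- `P(T_A > n)`: the probability that the chain with kernel `K` and initial distribution `μ`
avoids the set `A` up to time `n`, written as an explicit sum over trajectories. -/
noncomputable def hitAvoid {X : Type*} [Fintype X] (K : Matrix X X ℝ) (μ : X → ℝ)
    (A : Set X) (n : ℕ) : ℝ :=
  ∑ f : Fin (n + 1) → X,
    if ∀ k, f k ∉ A then μ (f 0) * ∏ k : Fin n, K (f k.castSucc) (f k.succ) else 0

noncomputable def avoidVec {X : Type*} [Fintype X] (K : Matrix X X ℝ) (μ : X → ℝ)
    (A : Set X) : ℕ → X → ℝ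
  | 0, x => if x ∈ A then 0 else μ x
  | (n+1), x => if x ∈ A then 0 else ∑ y, avoidVec K μ A n y * K y x

lemma avoidVec_nonneg {X : Type*} [Fintype X] (K : Matrix X X ℝ) (μ : X → ℝ) (A : Set X)
    (hK0 : ∀ x y, 0 ≤ K x y) (hμ : ∀ x, 0 ≤ μ x) : ∀ n x, 0 ≤ avoidVec K μ A n x := by
  intro n
  induction n with
  | zero =>
    intro x
    rw [avoidVec]
    split
    · exact le_refl 0
    · exact hμ x
  | succ n ih =>
    intro x
    rw [avoidVec]
    split
    · exact le_refl 0
    · exact Finset.sum_nonneg fun y _ => mul_nonneg (ih y) (hK0 y x)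

lemma avoidVec_path {X : Type*} [Fintype X] (K : Matrix X X ℝ) (μ : X → ℝ) (A : Set X) :
    ∀ (n : ℕ) (x : X), avoidVec K μ A n x =
      ∑ f : Fin (n+1) → X,
        if (∀ k, f k ∉ A) ∧ f (Fin.last n) = x then
          μ (f 0) * ∏ k : Fin n, K (f k.castSucc) (f k.succ) else 0 := by
  intro n
  induction n with
  | zero =>
    intro x
    rw [avoidVec, ← Equiv.sum_comp (Equiv.funUnique (Fin 1) X).symm]
    simp only [Equiv.funUnique_symm_apply, Function.const_apply]
    simp only [uniqueElim_const, Fin.prod_univ_zero, mul_one, forall_const]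
    rw [Fintype.sum_eq_single x (fun y hy => by rw [if_neg (fun h => hy h.2)])]
    by_cases hx : x ∈ A
    · rw [if_pos hx, if_neg (fun h => h.1 hx)]
    · rw [if_neg hx, if_pos ⟨hx, rfl⟩]
  | succ n ih =>
    intro x
    rw [avoidVec, ← Equiv.sum_comp (Fin.snocEquiv (fun _ => X)), Fintype.sum_prod_type]
    simp only [Fin.snocEquiv_apply]
    have hsnoc0 : ∀ (g : Fin (n+1) → X) (z : X), (Fin.snoc g z : Fin (n+2) → X) 0 = g 0 := by
      intro g z
      rw [show (0 : Fin (n+2)) = Fin.castSucc 0 from rfl, Fin.snoc_castSucc]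
    have key : ∀ (z : X) (g : Fin (n+1) → X),
        (if (∀ (k : Fin (n + 2)), (Fin.snoc g z : Fin (n+2) → X) k ∉ A) ∧
            (Fin.snoc g z : Fin (n+2) → X) (Fin.last (n+1)) = x then
          μ ((Fin.snoc g z : Fin (n+2) → X) 0) *
            ∏ k : Fin (n + 1), K ((Fin.snoc g z : Fin (n+2) → X) k.castSucc)
              ((Fin.snoc g z : Fin (n+2) → X) k.succ)
        else 0)
        = if z = x then
            (if (∀ k, g k ∉ A) ∧ x ∉ A then
              (μ (g 0) * ∏ k : Fin n, K (g k.castSucc) (g k.succ)) * K (g (Fin.last n)) x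
            else 0)
          else 0 := by
      intro z g
      by_cases hz : z = x
      · subst hz
        rw [if_pos rfl]
        have hcond : ((∀ (k : Fin (n + 2)), (Fin.snoc g z : Fin (n+2) → X) k ∉ A) ∧
            (Fin.snoc g z : Fin (n+2) → X) (Fin.last (n+1)) = z)
            ↔ ((∀ k, g k ∉ A) ∧ z ∉ A) := by
          rw [Fin.forall_fin_succ', Fin.snoc_last]
          simp only [Fin.snoc_castSucc, and_iff_left rfl, and_assoc]
          tauto
        by_cases hc : (∀ k, g k ∉ A) ∧ z ∉ A
        · rw [if_pos (hcond.mpr hc), if_pos hc, hsnoc0]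
          have hprod : (∏ k : Fin (n + 1), K ((Fin.snoc g z : Fin (n+2) → X) k.castSucc)
                ((Fin.snoc g z : Fin (n+2) → X) k.succ))
              = (∏ k : Fin n, K (g k.castSucc) (g k.succ)) * K (g (Fin.last n)) z := by
            rw [Fin.prod_univ_castSucc]
            congr 1
            · exact Finset.prod_congr rfl fun k _ => by
                rw [Fin.succ_castSucc, Fin.snoc_castSucc, Fin.snoc_castSucc]
            · rw [Fin.succ_last, Fin.snoc_last, Fin.snoc_castSucc]
          rw [hprod, mul_assoc]
        · rw [if_neg (fun h => hc (hcond.mp h)), if_neg hc]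
      · rw [if_neg hz, if_neg]
        intro h
        rw [Fin.snoc_last] at h
        exact hz h.2
    rw [Finset.sum_congr rfl (fun z _ => Finset.sum_congr rfl (fun g _ => key z g))]
    have collapse : ∀ z : X, (∑ g : Fin (n+1) → X, if z = x then
        (if (∀ k, g k ∉ A) ∧ x ∉ A then
          (μ (g 0) * ∏ k : Fin n, K (g k.castSucc) (g k.succ)) * K (g (Fin.last n)) x
        else 0) else 0)
        = if z = x then (∑ g : Fin (n+1) → X,
            if (∀ k, g k ∉ A) ∧ x ∉ A then
              (μ (g 0) * ∏ k : Fin n, K (g k.castSucc) (g k.succ)) * K (g (Fin.last n)) x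
            else 0) else 0 := by
      intro z; split <;> simp
    rw [Finset.sum_congr rfl (fun z _ => collapse z), Finset.sum_ite_eq' Finset.univ x,
      if_pos (Finset.mem_univ x)]
    by_cases hx : x ∈ A
    · rw [if_pos hx]
      exact (Finset.sum_eq_zero fun g _ => if_neg (fun h => h.2 hx)).symm
    · rw [if_neg hx]
      simp only [hx, not_false_iff, and_true]
      calc ∑ y, avoidVec K μ A n y * K y x
          = ∑ y, ∑ g : Fin (n+1) → X, (if (∀ k, g k ∉ A) ∧ g (Fin.last n) = y then
              μ (g 0) * ∏ k : Fin n, K (g k.castSucc) (g k.succ) else 0) * K y x := by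
            refine Finset.sum_congr rfl fun y _ => ?_
            rw [ih y, Finset.sum_mul]
        _ = ∑ g : Fin (n+1) → X, ∑ y, (if (∀ k, g k ∉ A) ∧ g (Fin.last n) = y then
              (μ (g 0) * ∏ k : Fin n, K (g k.castSucc) (g k.succ)) * K y x else 0) := by
            rw [Finset.sum_comm]
            exact Finset.sum_congr rfl fun g _ => Finset.sum_congr rfl fun y _ => by
              rw [ite_mul, zero_mul]
        _ = ∑ g : Fin (n+1) → X, if (∀ k, g k ∉ A) then
              (μ (g 0) * ∏ k : Fin n, K (g k.castSucc) (g k.succ)) * K (g (Fin.last n)) x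
            else 0 := by
            refine Finset.sum_congr rfl fun g _ => ?_
            by_cases hc : ∀ k, g k ∉ A
            · simp [hc, Finset.sum_ite_eq]
            · simp [hc]

lemma hitAvoid_eq {X : Type*} [Fintype X] (K : Matrix X X ℝ) (μ : X → ℝ) (A : Set X) (n : ℕ) :
    hitAvoid K μ A n = ∑ x, avoidVec K μ A n x := by
  rw [hitAvoid]
  simp only [avoidVec_path]
  rw [Finset.sum_comm]
  refine Finset.sum_congr rfl fun f _ => ?_
  by_cases hc : ∀ k, f k ∉ A
  · simp [hc, Finset.sum_ite_eq]
  · simp [hc]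

/-- `M = {x : π_n(x) ≤ π(x) for all n}` is a halting set:
`‖π_n - π‖_TV ≤ P(T_M > n)` for all `n`. -/
theorem stmt3 {m : ℕ} (K : Matrix (Fin m) (Fin m) ℝ) (π0 π : Fin m → ℝ)
    (hK0 : ∀ x y, 0 ≤ K x y) (hK1 : ∀ x, ∑ y, K x y = 1)
    (hπ00 : ∀ x, 0 ≤ π0 x) (hπ01 : ∑ x, π0 x = 1)
    (hπpos : ∀ x, 0 < π x) (hπ1 : ∑ x, π x = 1)
    (hstat : π ᵥ* K = π)
    (hirr : ∀ x y, ∃ n, 0 < (K ^ n) x y)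
    (n : ℕ) :
    (1/2) * (∑ x, |(π0 ᵥ* K ^ n) x - π x|)
      ≤ hitAvoid K π0 {x | ∀ k : ℕ, (π0 ᵥ* K ^ k) x ≤ π x} n := by
  set M : Set (Fin m) := {x | ∀ k : ℕ, (π0 ᵥ* K ^ k) x ≤ π x} with hM
  have hKrec : ∀ (N : ℕ) (x : Fin m), (π0 ᵥ* K ^ (N+1)) x = ∑ y, (π0 ᵥ* K ^ N) y * K y x := by
    intro N x
    rw [pow_succ, ← Matrix.vecMul_vecMul]
    rfl
  have hsum1 : ∀ N : ℕ, ∑ x, (π0 ᵥ* K ^ N) x = 1 := by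
    intro N
    induction N with
    | zero => simpa using hπ01
    | succ N ihN =>
      simp_rw [hKrec N]
      rw [Finset.sum_comm]
      simp_rw [← Finset.mul_sum, hK1, mul_one]
      exact ihN
  have hstat' : ∀ x, ∑ y, π y * K y x = π x := by
    intro x
    conv_rhs => rw [← hstat]
    rfl
  have hMmem : ∀ x ∈ M, ∀ k : ℕ, (π0 ᵥ* K ^ k) x ≤ π x := fun x hx => hx
  have key : ∀ (N : ℕ) (x : Fin m), (π0 ᵥ* K ^ N) x - π x ≤ avoidVec K π0 M N x := by
    intro N
    induction N with
    | zero =>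
      intro x
      rw [avoidVec]
      split
      · rename_i hx
        exact sub_nonpos.mpr (hMmem x hx 0)
      · have h0 : (π0 ᵥ* K ^ 0) x = π0 x := by simp
        rw [h0]
        linarith [(hπpos x).le]
    | succ N ihN =>
      intro x
      rw [avoidVec]
      split
      · rename_i hx
        exact sub_nonpos.mpr (hMmem x hx (N+1))
      · rw [hKrec]
        have hd : (∑ y, (π0 ᵥ* K ^ N) y * K y x) - π x
            = ∑ y, ((π0 ᵥ* K ^ N) y - π y) * K y x := by
          conv_lhs => rw [← hstat' x]
          rw [← Finset.sum_sub_distrib]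
          exact Finset.sum_congr rfl fun y _ => by ring
        rw [hd]
        refine Finset.sum_le_sum fun y _ => ?_
        by_cases hy : (π0 ᵥ* K ^ N) y - π y ≤ 0
        · exact le_trans (mul_nonpos_iff.mpr (Or.inr ⟨hy, hK0 y x⟩))
            (mul_nonneg (avoidVec_nonneg _ _ _ hK0 hπ00 N y) (hK0 y x))
        · exact mul_le_mul_of_nonneg_right (ihN y) (hK0 y x)
  rw [hitAvoid_eq]
  have hzero : ∑ x, ((π0 ᵥ* K ^ n) x - π x) = 0 := by
    rw [Finset.sum_sub_distrib, hsum1, hπ1]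
    ring
  have habs : ∀ x, |(π0 ᵥ* K ^ n) x - π x|
      = 2 * max ((π0 ᵥ* K ^ n) x - π x) 0 - ((π0 ᵥ* K ^ n) x - π x) := by
    intro x
    rcases le_or_gt ((π0 ᵥ* K ^ n) x - π x) 0 with h | h
    · rw [abs_of_nonpos h, max_eq_right h]; ring
    · rw [abs_of_pos h, max_eq_left h.le]; ring
  calc (1/2) * (∑ x, |(π0 ᵥ* K ^ n) x - π x|)
      = ∑ x, max ((π0 ᵥ* K ^ n) x - π x) 0 := by
        simp_rw [habs]
        rw [Finset.sum_sub_distrib, hzero, ← Finset.mul_sum]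
        ring
    _ ≤ ∑ x, avoidVec K π0 M n x :=
        Finset.sum_le_sum fun x _ =>
          max_le (key n x) (avoidVec_nonneg _ _ _ hK0 hπ00 n x)
end

section
/- For an irreducible reversible Markov chain P on finite X, a set A ⊂ X with P^A = P restricted to A^c × A^c irreducible aperiodic, and λ_A the largest eigenvalue of P^A: for all n ≥ 0 and starting from stationarity, P_π(T_A > n) ≤ π(A^c) λ_A^n. -/
/-!
Write `π` also for its restriction to `Aᶜ` and let `D = diag √π`. Reversibility makes
`S = D P^A D⁻¹` symmetric; it has the spectrum of `P^A` and nonnegative entries. Summing over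
trajectories,
`P_π(T_A > n) = ∑_y (π (P^A)^n)_y = ⟨√π, S^n √π⟩ ≤ λ_A^n ‖√π‖² = π(Aᶜ) λ_A^n`,
where `|μ| ≤ λ_A` for every eigenvalue `μ` of `S`: for a unit eigenvector `v`,
`-μ = -⟨v, S v⟩ ≤ ⟨|v|, S |v|⟩ ≤ λ_A` by nonnegativity of `S`.
-/

open Matrix Finset Classical

namespace Matrix

section Paths

variable {R ι : Type*} [CommSemiring R] [Fintype ι] [DecidableEq ι]

theorem sum_paths_eq_sum_vecMul_pow (M : Matrix ι ι R) (n : ℕ) (ν : ι → R) :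
    ∑ g : Fin (n + 1) → ι, ν (g 0) * ∏ k : Fin n, M (g k.castSucc) (g k.succ)
      = ∑ j, (ν ᵥ* M ^ n) j := by
  induction n generalizing ν with
  | zero =>
    rw [pow_zero, vecMul_one]
    exact Fintype.sum_equiv (Equiv.funUnique (Fin 1) ι) _ _ fun g => by simp
  | succ n ih =>
    rw [pow_succ', ← vecMul_vecMul, ← ih, ← (Fin.consEquiv fun _ => ι).sum_comp,
      Fintype.sum_prod_type, Finset.sum_comm]
    refine Finset.sum_congr rfl fun g _ => ?_
    simp only [Fin.consEquiv_apply, Fin.prod_univ_succ, vecMul, dotProduct, Finset.sum_mul,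
      Fin.cons_zero, Fin.castSucc_zero, Fin.cons_succ, ← Fin.succ_castSucc, mul_assoc]

end Paths

variable {ι : Type*} [Fintype ι] [DecidableEq ι]

theorem dotProduct_vecMul_self_of_mem_unitaryGroup {U : Matrix ι ι ℝ}
    (hU : U ∈ unitaryGroup ι ℝ) (f : ι → ℝ) :
    (f ᵥ* U) ⬝ᵥ (f ᵥ* U) = f ⬝ᵥ f := by
  nth_rewrite 2 [← mulVec_transpose]
  rw [← conjTranspose_eq_transpose_of_trivial, ← star_eq_conjTranspose,
    dotProduct_mulVec, vecMul_vecMul, mem_unitaryGroup_iff.mp hU, vecMul_one]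

theorem dotProduct_mulVec_conj_diagonal (U : Matrix ι ι ℝ) (d f : ι → ℝ) :
    f ⬝ᵥ ((U * diagonal d * star U) *ᵥ f) = ∑ i, d i * (f ᵥ* U) i ^ 2 := by
  rw [dotProduct_mulVec, ← vecMul_vecMul, ← vecMul_vecMul, star_eq_conjTranspose,
    conjTranspose_eq_transpose_of_trivial, vecMul_transpose, dotProduct_comm, dotProduct_mulVec]
  simp only [dotProduct, vecMul_diagonal]
  exact Finset.sum_congr rfl fun i _ => by ring

namespace IsHermitian

variable {S : Matrix ι ι ℝ} (hS : S.IsHermitian)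
include hS

theorem pow_eq_conj_diagonal (n : ℕ) :
    S ^ n = (hS.eigenvectorUnitary : Matrix ι ι ℝ) * diagonal (hS.eigenvalues ^ n)
      * star (hS.eigenvectorUnitary : Matrix ι ι ℝ) := by
  have h := hS.spectral_theorem
  rw [RCLike.ofReal_real_eq_id, Function.id_comp, Unitary.conjStarAlgAut_apply] at h
  conv_lhs => rw [h]
  exact (Unitary.toUnits hS.eigenvectorUnitary).conj_pow _ n |>.trans (by rw [diagonal_pow]; rfl)

theorem dotProduct_pow_mulVec_le {n : ℕ} {c : ℝ} (hc : ∀ i, hS.eigenvalues i ^ n ≤ c)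
    (f : ι → ℝ) : f ⬝ᵥ (S ^ n *ᵥ f) ≤ c * (f ⬝ᵥ f) := by
  rw [hS.pow_eq_conj_diagonal, dotProduct_mulVec_conj_diagonal,
    ← dotProduct_vecMul_self_of_mem_unitaryGroup hS.eigenvectorUnitary.2 f, dotProduct,
    Finset.mul_sum]
  exact Finset.sum_le_sum fun i _ => by
    rw [Pi.pow_apply, ← sq]
    exact mul_le_mul_of_nonneg_right (hc i) (sq_nonneg _)

theorem abs_eigenvalues_le_of_nonneg (hnn : ∀ i j, 0 ≤ S i j) {lam : ℝ}
    (hle : ∀ i, hS.eigenvalues i ≤ lam) (i : ι) : |hS.eigenvalues i| ≤ lam := by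
  set v : ι → ℝ := ⇑(hS.eigenvectorBasis i)
  have hvv : v ⬝ᵥ v = 1 :=
    inner_self_eq_one_of_norm_eq_one (𝕜 := ℝ) (hS.eigenvectorBasis.orthonormal.1 i)
  have heig : hS.eigenvalues i = v ⬝ᵥ (S *ᵥ v) := by
    rw [hS.mulVec_eigenvectorBasis, dotProduct_smul, hvv, smul_eq_mul, mul_one]
  have habs : -(v ⬝ᵥ (S *ᵥ v)) ≤ |v| ⬝ᵥ (S *ᵥ |v|) := by
    simp only [dotProduct, mulVec, Finset.mul_sum, ← Finset.sum_neg_distrib, Pi.abs_apply]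
    refine Finset.sum_le_sum fun a _ => Finset.sum_le_sum fun b _ => ?_
    calc -(v a * (S a b * v b)) ≤ |v a * (S a b * v b)| := neg_le_abs _
      _ = |v a| * (S a b * |v b|) := by rw [abs_mul, abs_mul, abs_of_nonneg (hnn a b)]
  have hray : |v| ⬝ᵥ (S *ᵥ |v|) ≤ lam := by
    have h := hS.dotProduct_pow_mulVec_le (n := 1) (by simpa using hle) |v|
    have h1 : |v| ⬝ᵥ |v| = v ⬝ᵥ v := by simp [dotProduct, abs_mul_abs_self]
    rwa [pow_one, h1, hvv, mul_one] at h
  rw [abs_le]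
  constructor <;> linarith [hle i]

end IsHermitian

section DiagonalConj

variable {K : Type*} [Field K]

def diagonalUnit (d : ι → K) (hd : ∀ i, d i ≠ 0) : (Matrix ι ι K)ˣ where
  val := diagonal d
  inv := diagonal d⁻¹
  val_inv := by
    rw [diagonal_mul_diagonal, ← diagonal_one]
    exact congrArg diagonal (funext fun i => mul_inv_cancel₀ (hd i))
  inv_val := by
    rw [diagonal_mul_diagonal, ← diagonal_one]
    exact congrArg diagonal (funext fun i => inv_mul_cancel₀ (hd i))

variable (d : ι → K) (hd : ∀ i, d i ≠ 0) (M : Matrix ι ι K)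

theorem diagonalUnit_conj_apply (i j : ι) :
    ((diagonalUnit d hd : Matrix ι ι K) * M * (↑(diagonalUnit d hd)⁻¹ : Matrix ι ι K)) i j
      = d i * M i j * (d j)⁻¹ := by
  simp [diagonalUnit, mul_diagonal, diagonal_mul]

theorem dotProduct_diagonalUnit_conj_mulVec :
    d ⬝ᵥ (((diagonalUnit d hd : Matrix ι ι K) * M * (↑(diagonalUnit d hd)⁻¹ : Matrix ι ι K))
      *ᵥ d) = ∑ j, ((d * d) ᵥ* M) j := by
  simp only [dotProduct, mulVec, diagonalUnit_conj_apply, vecMul, Finset.mul_sum, Pi.mul_apply]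
  rw [Finset.sum_comm]
  refine Finset.sum_congr rfl fun i _ => Finset.sum_congr rfl fun j _ => ?_
  rw [mul_comm, inv_mul_cancel_right₀ (hd i)]
  ring

theorem isHermitian_diagonalUnit_conj {d : ι → ℝ} (hd : ∀ i, d i ≠ 0)
    {Q : Matrix ι ι ℝ} (hrev : ∀ i j, d i * d i * Q i j = d j * d j * Q j i) :
    ((diagonalUnit d hd : Matrix ι ι ℝ) * Q
      * (↑(diagonalUnit d hd)⁻¹ : Matrix ι ι ℝ)).IsHermitian := by
  refine IsHermitian.ext fun i j => ?_
  have hi := hd i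
  have hj := hd j
  simp only [diagonalUnit_conj_apply, star_trivial]
  field_simp
  linear_combination hrev j i

end DiagonalConj

theorem sum_vecMul_pow_le_of_detailedBalance {Q : Matrix ι ι ℝ} {w : ι → ℝ}
    (hQ : ∀ i j, 0 ≤ Q i j) (hw : ∀ i, 0 < w i) (hrev : ∀ i j, w i * Q i j = w j * Q j i)
    {lam : ℝ} (hlam : ∀ μ ∈ spectrum ℝ Q, μ ≤ lam) (n : ℕ) :
    ∑ j, (w ᵥ* Q ^ n) j ≤ (∑ i, w i) * lam ^ n := by
  set d : ι → ℝ := fun i => √(w i)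
  have hd : ∀ i, 0 < d i := fun i => Real.sqrt_pos.2 (hw i)
  have hdd : ∀ i, d i * d i = w i := fun i => Real.mul_self_sqrt (hw i).le
  set u := diagonalUnit d fun i => (hd i).ne'
  set S := (u : Matrix ι ι ℝ) * Q * (↑u⁻¹ : Matrix ι ι ℝ)
  have hS : S.IsHermitian :=
    isHermitian_diagonalUnit_conj _ fun i j => by rw [hdd, hdd]; exact hrev i j
  have hS0 : ∀ i j, 0 ≤ S i j := fun i j => by
    simp only [S, u, diagonalUnit_conj_apply]
    have := hQ i j
    have := hd i
    have := hd j
    positivity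
  have heig : ∀ i, hS.eigenvalues i ≤ lam := fun i =>
    hlam _ (spectrum.units_conjugate (R := ℝ) (u := u) ▸ hS.eigenvalues_mem_spectrum_real i)
  have hquad : ∑ j, (w ᵥ* Q ^ n) j = d ⬝ᵥ (S ^ n *ᵥ d) := by
    rw [Units.conj_pow, dotProduct_diagonalUnit_conj_mulVec, show d * d = w from funext hdd]
  have hnorm : d ⬝ᵥ d = ∑ i, w i := Finset.sum_congr rfl fun i _ => hdd i
  rw [hquad, ← hnorm, mul_comm]
  refine hS.dotProduct_pow_mulVec_le (fun i => ?_) d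
  calc hS.eigenvalues i ^ n ≤ |hS.eigenvalues i| ^ n := (le_abs_self _).trans (abs_pow _ _).le
    _ ≤ lam ^ n :=
      pow_le_pow_left₀ (abs_nonneg _) (hS.abs_eigenvalues_le_of_nonneg hS0 heig i) n

end Matrix

theorem hitAvoid_eq_sum_paths {X : Type*} [Fintype X] [DecidableEq X] (K : Matrix X X ℝ)
    (μ : X → ℝ) (A : Finset X) (n : ℕ) :
    hitAvoid K μ ↑A n = ∑ g : Fin (n + 1) → {x // x ∉ A},
      μ (g 0) * ∏ k : Fin n, K (g k.castSucc) (g k.succ) := by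
  simp only [hitAvoid, Finset.mem_coe]
  rw [← Finset.sum_filter]
  symm
  exact Finset.sum_bij' (fun g _ k => (g k).1) (fun f hf k => ⟨f k, (mem_filter.1 hf).2 k⟩)
    (fun g _ => mem_filter.2 ⟨mem_univ _, fun k => (g k).2⟩) (fun _ _ => mem_univ _)
    (fun _ _ => rfl) (fun _ _ => rfl) (fun _ _ => rfl)

theorem stmt5_general {m : ℕ} (P : Matrix (Fin m) (Fin m) ℝ) (π : Fin m → ℝ)
    (A : Finset (Fin m))
    (hP0 : ∀ x y, 0 ≤ P x y)
    (hπpos : ∀ x, 0 < π x)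
    (hrev : ∀ x y, π x * P x y = π y * P y x)
    (PA : Matrix {x : Fin m // x ∉ A} {x : Fin m // x ∉ A} ℝ)
    (hPA : ∀ i j, PA i j = P i.1 j.1)
    (lamA : ℝ)
    (hMax : ∀ μ ∈ spectrum ℝ PA, μ ≤ lamA)
    (n : ℕ) :
    hitAvoid P π (↑A) n ≤ (∑ x ∈ Aᶜ, π x) * lamA ^ n := by
  have hpaths : hitAvoid P π ↑A n = ∑ j, ((fun i : {x // x ∉ A} => π i) ᵥ* PA ^ n) j := by
    rw [hitAvoid_eq_sum_paths, ← sum_paths_eq_sum_vecMul_pow]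
    simp only [hPA]
  have hmass : ∑ x ∈ Aᶜ, π x = ∑ i : {x // x ∉ A}, π i :=
    Finset.sum_subtype _ (fun _ => mem_compl) π
  rw [hpaths, hmass]
  refine sum_vecMul_pow_le_of_detailedBalance (Q := PA) (fun i j => ?_) (fun i => hπpos i)
    (fun i j => ?_) hMax n
  · exact hPA i j ▸ hP0 i j
  · simpa only [hPA] using hrev i j

/-- for a reversible irreducible chain `P` on a finite state space, `A` a set
such that the restriction `P^A` of `P` to `Aᶜ × Aᶜ` is irreducible and aperiodic (primitive),
and `λ_A` the largest eigenvalue of `P^A`: `P_π(T_A > n) ≤ π(Aᶜ) λ_A ^ n` for all `n`. -/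
theorem stmt5 {m : ℕ} (P : Matrix (Fin m) (Fin m) ℝ) (π : Fin m → ℝ)
    (A : Finset (Fin m))
    (hP0 : ∀ x y, 0 ≤ P x y) (hP1 : ∀ x, ∑ y, P x y = 1)
    (hπpos : ∀ x, 0 < π x) (hπ1 : ∑ x, π x = 1)
    (hstat : π ᵥ* P = π)
    (hrev : ∀ x y, π x * P x y = π y * P y x)
    (hirr : ∀ x y, ∃ n, 0 < (P ^ n) x y)
    (PA : Matrix {x : Fin m // x ∉ A} {x : Fin m // x ∉ A} ℝ)
    (hPA : ∀ i j, PA i j = P i.1 j.1)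
    (hprim : ∃ k, ∀ i j, 0 < (PA ^ k) i j)
    (lamA : ℝ)
    (hEig : lamA ∈ spectrum ℝ PA)
    (hMax : ∀ μ ∈ spectrum ℝ PA, μ ≤ lamA)
    (n : ℕ) :
    hitAvoid P π (↑A) n ≤ (∑ x ∈ Aᶜ, π x) * lamA ^ n :=
  stmt5_general P π A hP0 hπpos hrev PA hPA lamA hMax n
end

section
/- Let P be a monotone irreducible birth-and-death transition matrix on {0,…,N} with eigenvalues 1 = β_0 > β_1 ≥ … ≥ β_N > -1. Then |β_N| ≤ β_1. -/
/-!
Conjugating `P` by the lower triangular matrix of ones gives a matrix `K` whose entries are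
differences `∑_{z ≥ y} P x z - ∑_{z ≥ y} P (x-1) z` of tail sums. For a birth-and-death chain the
condition `p_x + q_{x+1} ≤ 1` says exactly that these tail sums are nondecreasing in `x`, so `K` is
entrywise nonnegative; since the rows of `P` sum to `1`, the first column of `K` is `e₀`. Hence
`(K^m)₀₀ = 1` and `∑ₖ βₖ^m = tr P^m = tr K^m ≥ 1`, i.e. `∑_{k ≥ 1} βₖ^m ≥ 0` for all `m`.
If `|β_N| > β_1`, then `β_N < 0` would strictly dominate all other `βₖ`, `k ≥ 1`, in modulus,
and the sum would be negative for large odd `m`.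
-/

open Matrix Finset

namespace Matrix

theorem trace_pow_eq_sum_pow_of_injective {K n : Type*} [Field K] [Fintype n]
    [DecidableEq n] (M : Matrix n n K) (β : n → K) (hβ : Function.Injective β)
    (hspec : ∀ k, β k ∈ spectrum K M) (m : ℕ) :
    (M ^ m).trace = ∑ k, β k ^ m := by
  cases isEmpty_or_nonempty n
  · simp
  have hev (k : n) : Module.End.HasEigenvalue (toLin' M) (β k) :=
    Module.End.hasEigenvalue_iff_mem_spectrum.mpr (by rw [spectrum_toLin']; exact hspec k)
  choose v hv using fun k => (hev k).exists_hasEigenvector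
  have hli : LinearIndependent K v := Module.End.eigenvectors_linearIndependent' _ β hβ v hv
  have hcard : Fintype.card n = Module.finrank K (n → K) :=
    (Module.finrank_fintype_fun_eq_card K).symm
  let b := basisOfLinearIndependentOfCardEqFinrank hli hcard
  have hb : ⇑b = v := coe_basisOfLinearIndependentOfCardEqFinrank hli hcard
  rw [← LinearMap.toMatrix'_toLin' (M ^ m), ← LinearMap.toMatrix_eq_toMatrix',
    ← LinearMap.trace_eq_matrix_trace, LinearMap.trace_eq_matrix_trace K b, toLin'_pow]
  refine sum_congr rfl fun k _ => ?_
  rw [diag_apply, LinearMap.toMatrix_apply, hb, (hv k).pow_apply, ← hb, map_smul,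
    Module.Basis.repr_self]
  simp

variable {R : Type*}

def lowerOnes [Zero R] [One R] (n : ℕ) : Matrix (Fin n) (Fin n) R :=
  of fun i j => if j ≤ i then 1 else 0

def backwardDiff [Zero R] [One R] [Neg R] (n : ℕ) : Matrix (Fin n) (Fin n) R :=
  of fun i j => if j = i then 1 else if (j : ℕ) + 1 = i then -1 else 0

section Ring

variable [Ring R] {m : Type*} {n : ℕ}

theorem mul_lowerOnes_apply (A : Matrix m (Fin n) R) (x : m) (y : Fin n) :
    (A * (lowerOnes n : Matrix (Fin n) (Fin n) R)) x y = ∑ z with y ≤ z, A x z := by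
  simp [mul_apply, lowerOnes, sum_filter]

theorem backwardDiff_mul_apply_zero [Fintype m] (A : Matrix (Fin (n + 1)) m R) (y : m) :
    ((backwardDiff (n + 1) : Matrix (Fin (n + 1)) (Fin (n + 1)) R) * A) 0 y = A 0 y := by
  rw [mul_apply, sum_eq_single 0]
  · simp [backwardDiff]
  · intro w _ hw
    simp [backwardDiff, hw]
  · simp

theorem backwardDiff_mul_apply_succ [Fintype m] (A : Matrix (Fin (n + 1)) m R) (i : Fin n)
    (y : m) :
    ((backwardDiff (n + 1) : Matrix (Fin (n + 1)) (Fin (n + 1)) R) * A) i.succ y =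
      A i.succ y - A i.castSucc y := by
  have hsupp : ∀ w : Fin (n + 1), backwardDiff (n + 1) i.succ w * A w y =
      (if w = i.succ then A w y else 0) + (if w = i.castSucc then -A w y else 0) := by
    intro w
    simp only [backwardDiff, of_apply, Fin.ext_iff, Fin.val_succ, Fin.val_castSucc]
    split_ifs <;> first | omega | simp
  rw [mul_apply, sum_congr rfl fun w _ => hsupp w, sum_add_distrib,
    sum_ite_eq', sum_ite_eq']
  simp [sub_eq_add_neg]

theorem backwardDiff_mul_lowerOnes :
    (backwardDiff n : Matrix (Fin n) (Fin n) R) * lowerOnes n = 1 := by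
  ext x y
  cases n with
  | zero => exact x.elim0
  | succ n =>
    cases x using Fin.cases with
    | zero =>
      rw [backwardDiff_mul_apply_zero]
      simp [lowerOnes, one_apply, nonpos_iff_eq_zero, eq_comm]
    | succ i =>
      rw [backwardDiff_mul_apply_succ]
      simp only [lowerOnes, of_apply, one_apply, Fin.le_def, Fin.ext_iff, Fin.val_succ,
        Fin.val_castSucc]
      split_ifs <;> first | omega | simp

end Ring

section CommRing

variable [CommRing R] {n : ℕ}

/-- `P` in the basis of tail indicators `𝟙_{z ≥ y}`, the columns of `lowerOnes`. -/
def tailConj (P : Matrix (Fin n) (Fin n) R) : Matrix (Fin n) (Fin n) R :=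
  backwardDiff n * P * lowerOnes n

theorem trace_pow_tailConj (P : Matrix (Fin n) (Fin n) R) (m : ℕ) :
    (tailConj P ^ m).trace = (P ^ m).trace := by
  let u : (Matrix (Fin n) (Fin n) R)ˣ :=
    ⟨lowerOnes n, backwardDiff n, mul_eq_one_comm.mp backwardDiff_mul_lowerOnes,
      backwardDiff_mul_lowerOnes⟩
  exact (Units.conj_pow' u P m).symm ▸ trace_units_conj' u (P ^ m)

theorem tailConj_apply_zero (P : Matrix (Fin (n + 1)) (Fin (n + 1)) R) (y : Fin (n + 1)) :
    tailConj P 0 y = ∑ z with y ≤ z, P 0 z := by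
  rw [tailConj, Matrix.mul_assoc, backwardDiff_mul_apply_zero, mul_lowerOnes_apply]

theorem tailConj_apply_succ (P : Matrix (Fin (n + 1)) (Fin (n + 1)) R) (i : Fin n)
    (y : Fin (n + 1)) :
    tailConj P i.succ y = ∑ z with y ≤ z, P i.succ z - ∑ z with y ≤ z, P i.castSucc z := by
  rw [tailConj, Matrix.mul_assoc, backwardDiff_mul_apply_succ, mul_lowerOnes_apply,
    mul_lowerOnes_apply]

variable [PartialOrder R] [IsOrderedRing R]

theorem monotone_tailSum_of_birthDeath {P : Matrix (Fin (n + 1)) (Fin (n + 1)) R}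
    (hP : P ∈ rowStochastic R (Fin (n + 1)))
    (htri : ∀ x y : Fin (n + 1), 1 < ((x : ℤ) - (y : ℤ)).natAbs → P x y = 0)
    (hmono : ∀ i : Fin n, P i.castSucc i.succ + P i.succ i.castSucc ≤ 1) (y : Fin (n + 1)) :
    Monotone fun x => ∑ z with y ≤ z, P x z := by
  have hfar (x z : Fin (n + 1)) (h : (x : ℕ) + 1 < z ∨ (z : ℕ) + 1 < x) : P x z = 0 :=
    htri x z (by omega)
  have hrow := sum_row_of_mem_rowStochastic hP
  rw [Fin.monotone_iff_le_succ]
  intro i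
  have hi : (i.succ : ℕ) = i.castSucc + 1 := rfl
  rcases lt_trichotomy y i.succ with hy | rfl | hy
  · have hfull : ∑ z with y ≤ z, P i.succ z = 1 :=
      (sum_filter_of_ne fun z _ hz => not_lt.mp fun hzy => hz (hfar _ _ (by omega))).trans
        (hrow _)
    rw [hfull, ← hrow i.castSucc]
    exact sum_le_sum_of_subset_of_nonneg (filter_subset _ _)
      fun z _ _ => nonneg_of_mem_rowStochastic hP
  · have hleft : ∑ z with i.succ ≤ z, P i.castSucc z = P i.castSucc i.succ :=
      sum_eq_single_of_mem _ (by simp) fun z hz hzi =>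
        hfar _ _ (by have := (mem_filter.mp hz).2; omega)
    have hright : ∑ z with ¬ i.succ ≤ z, P i.succ z = P i.succ i.castSucc :=
      sum_eq_single_of_mem _ (by simp) fun z hz hzi =>
        hfar _ _ (by have := (mem_filter.mp hz).2; have := Fin.val_ne_of_ne hzi; omega)
    have hsplit := sum_filter_add_sum_filter_not univ (i.succ ≤ ·) (P i.succ)
    rw [hrow, hright] at hsplit
    rw [hleft, eq_sub_of_add_eq hsplit]
    exact le_sub_iff_add_le.mpr (hmono i)
  · have hzero : ∑ z with y ≤ z, P i.castSucc z = 0 :=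
      sum_eq_zero fun z hz => hfar _ _ (by have := (mem_filter.mp hz).2; omega)
    rw [hzero]
    exact sum_nonneg fun z _ => nonneg_of_mem_rowStochastic hP

theorem one_le_trace_pow_of_mulVec_single {ι : Type*} [Fintype ι] [DecidableEq ι]
    {K : Matrix ι ι R} (hK : ∀ i j, 0 ≤ K i j) {i : ι}
    (hfix : K *ᵥ Pi.single i 1 = Pi.single i 1) (m : ℕ) : 1 ≤ (K ^ m).trace := by
  have hfix_pow : K ^ m *ᵥ Pi.single i 1 = Pi.single i 1 := by
    induction m with
    | zero => exact one_mulVec _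
    | succ m ih => rw [pow_succ', ← mulVec_mulVec, ih, hfix]
  calc (1 : R) = (K ^ m) i i := by simpa using (congrFun hfix_pow i).symm
    _ ≤ ∑ j, (K ^ m) j j := single_le_sum (fun j _ => pow_apply_nonneg hK m j j) (mem_univ i)

theorem tailConj_nonneg {P : Matrix (Fin (n + 1)) (Fin (n + 1)) R}
    (hP : P ∈ rowStochastic R (Fin (n + 1)))
    (hmono : ∀ y, Monotone fun x => ∑ z with y ≤ z, P x z) (x y : Fin (n + 1)) :
    0 ≤ tailConj P x y := by
  cases x using Fin.cases with
  | zero =>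
    rw [tailConj_apply_zero]
    exact sum_nonneg fun z _ => nonneg_of_mem_rowStochastic hP
  | succ i =>
    rw [tailConj_apply_succ, sub_nonneg]
    exact hmono y (Fin.castSucc_le_succ i)

theorem tailConj_mulVec_single_zero {P : Matrix (Fin (n + 1)) (Fin (n + 1)) R}
    (hP : P ∈ rowStochastic R (Fin (n + 1))) : tailConj P *ᵥ Pi.single 0 1 = Pi.single 0 1 := by
  ext x
  rw [mulVec_single_one, col_apply]
  cases x using Fin.cases with
  | zero => simp [tailConj_apply_zero, sum_row_of_mem_rowStochastic hP]
  | succ i => simp [tailConj_apply_succ, sum_row_of_mem_rowStochastic hP]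

end CommRing

end Matrix

theorem nonneg_of_abs_lt_of_forall_odd_sum_pow_nonneg {ι : Type*} {s : Finset ι} {f : ι → ℝ}
    {j : ι} (hj : j ∈ s) (hdom : ∀ k ∈ s, k ≠ j → |f k| < |f j|)
    (hsum : ∀ m, Odd m → 0 ≤ ∑ k ∈ s, f k ^ m) : 0 ≤ f j := by
  classical
  by_contra! hneg
  have ht : 0 < |f j| := abs_pos.mpr hneg.ne
  have htend : Filter.Tendsto (fun m => ∑ k ∈ s.erase j, (f k / |f j|) ^ m) Filter.atTop
      (nhds 0) := by
    simpa using tendsto_finsetSum _ fun k hk => tendsto_pow_atTop_nhds_zero_of_abs_lt_one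
      (by rw [abs_div, abs_abs, div_lt_one ht]
          exact hdom k (mem_of_mem_erase hk) (ne_of_mem_erase hk))
  obtain ⟨M, hM⟩ := Filter.eventually_atTop.mp (htend.eventually_lt_const one_pos)
  have hodd : Odd (2 * M + 1) := odd_two_mul_add_one M
  have hpow : f j ^ (2 * M + 1) = -|f j| ^ (2 * M + 1) := by
    rw [abs_of_neg hneg, hodd.neg_pow, neg_neg]
  have hge : 1 ≤ ∑ k ∈ s.erase j, (f k / |f j|) ^ (2 * M + 1) := by
    have h := hsum _ hodd
    rw [← add_sum_erase s _ hj, hpow] at h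
    simp_rw [div_pow, ← sum_div]
    rw [le_div_iff₀ (pow_pos ht _)]
    linarith
  exact (hM _ (by omega)).not_ge hge

/-- let `P` be a monotone irreducible birth-and-death transition matrix on
`{0,…,N}` with (real, simple) eigenvalues `1 = β_0 > β_1 > … > β_N > -1`.
Then `|β_N| ≤ β_1`. -/
theorem stmt7 {N : ℕ} (hN : 1 ≤ N)
    (P : Matrix (Fin (N + 1)) (Fin (N + 1)) ℝ)
    (hP0 : ∀ x y, 0 ≤ P x y) (hP1 : ∀ x, ∑ y, P x y = 1)
    -- birth-and-death: tridiagonal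
    (htri : ∀ x y : Fin (N + 1), 1 < ((x : ℤ) - (y : ℤ)).natAbs → P x y = 0)
    -- monotone: p_x + q_{x+1} ≤ 1
    (hmono : ∀ i : Fin N, P i.castSucc i.succ + P i.succ i.castSucc ≤ 1)
    -- the eigenvalues
    (β : Fin (N + 1) → ℝ)
    (hβeig : ∀ k, β k ∈ spectrum ℝ P)
    (hβanti : StrictAnti β)
    (hβ0 : β 0 = 1) :
    |β (Fin.last N)| ≤ β ⟨1, by omega⟩ := by
  have hP : P ∈ rowStochastic ℝ (Fin (N + 1)) := mem_rowStochastic_iff_sum.mpr ⟨hP0, hP1⟩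
  have hsum (m : ℕ) : 0 ≤ ∑ k ∈ univ.erase 0, β k ^ m := by
    have h := one_le_trace_pow_of_mulVec_single
      (tailConj_nonneg hP (monotone_tailSum_of_birthDeath hP htri hmono))
      (tailConj_mulVec_single_zero hP) m
    rw [trace_pow_tailConj, trace_pow_eq_sum_pow_of_injective P β hβanti.injective hβeig,
      ← add_sum_erase _ _ (mem_univ 0), hβ0, one_pow] at h
    linarith
  by_contra! hlt
  have hdom : ∀ k ∈ univ.erase 0, k ≠ Fin.last N → |β k| < |β (Fin.last N)| := by
    intro k hk hkL
    have hk0 : (k : ℕ) ≠ 0 := Fin.val_ne_iff.mpr (ne_of_mem_erase hk)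
    have hk1 : β k ≤ β ⟨1, by omega⟩ :=
      hβanti.antitone (Fin.le_def.mpr (Nat.one_le_iff_ne_zero.mpr hk0))
    have hLk : β (Fin.last N) < β k := hβanti (lt_of_le_of_ne (Fin.le_last k) hkL)
    rw [abs_lt]
    constructor <;> linarith [neg_abs_le (β (Fin.last N))]
  have hL := nonneg_of_abs_lt_of_forall_odd_sum_pow_nonneg
    (mem_erase.mpr ⟨Fin.ne_of_val_ne (by rw [Fin.val_last, Fin.val_zero]; omega), mem_univ _⟩)
    hdom fun m _ => hsum m
  rw [abs_of_nonneg hL] at hlt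
  exact hlt.not_ge (hβanti.antitone (Fin.le_last _))
end

section
/- Let λ_0 = 1 > λ_1 > … > λ_d > 0 and Γ_n = Σ_{i=0}^d A_i λ_i^n with A_0 ≥ 0. If Γ_i = 0 for 0 ≤ i ≤ d-1, then the sequence n ↦ Γ_n is increasing, and consequently Γ_n ≤ A_0 for all n ≥ 0. -/
open Finset

/-- Auxiliary lemma: the exponential sum is nonnegative and increasing. -/
lemma stmt12_aux : ∀ (d : ℕ) (A lam : ℕ → ℝ), 0 ≤ A 0 → lam 0 = 1 →
    (∀ i j, i < j → j ≤ d → lam j < lam i) → 0 < lam d →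
    (∀ i < d, (∑ k ∈ Finset.range (d + 1), A k * lam k ^ i) = 0) →
    ∀ n, 0 ≤ (∑ k ∈ Finset.range (d + 1), A k * lam k ^ n) ∧
      (∑ k ∈ Finset.range (d + 1), A k * lam k ^ n)
        ≤ ∑ k ∈ Finset.range (d + 1), A k * lam k ^ (n + 1) := by
  intro d
  induction d with
  | zero =>
    intro A lam hA0 hl0 _ _ _ n
    simp [hl0, hA0]
  | succ d ih =>
    intro A lam hA0 hl0 hanti hpos hzero
    set F : ℕ → ℝ := fun n => ∑ k ∈ Finset.range (d + 2), A k * lam k ^ n with hF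
    set G : ℕ → ℝ := fun n =>
      ∑ k ∈ Finset.range (d + 1), (A k * (lam k - lam (d + 1))) * lam k ^ n with hG
    have hlt1 : lam (d + 1) < 1 := by
      have := hanti 0 (d + 1) (Nat.succ_pos d) le_rfl
      rwa [hl0] at this
    have hgt0 : 0 < lam (d + 1) := hpos
    have hFG : ∀ n, G n = F (n + 1) - lam (d + 1) * F n := by
      intro n
      have h1 : F (n + 1) - lam (d + 1) * F n
          = ∑ k ∈ Finset.range (d + 2), (A k * (lam k - lam (d + 1))) * lam k ^ n := by
        rw [hF]
        rw [Finset.mul_sum, ← Finset.sum_sub_distrib]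
        exact Finset.sum_congr rfl fun k _ => by ring
      rw [h1, Finset.sum_range_succ]
      simp [hG]
    -- apply induction hypothesis to G
    have hGres : ∀ n, 0 ≤ G n ∧ G n ≤ G (n + 1) := by
      refine ih (fun k => A k * (lam k - lam (d + 1))) lam ?_ hl0 ?_ ?_ ?_
      · show 0 ≤ A 0 * (lam 0 - lam (d + 1))
        rw [hl0]
        have : 0 ≤ 1 - lam (d + 1) := by linarith
        exact mul_nonneg hA0 this
      · intro i j hij hj
        exact hanti i j hij (le_trans hj (Nat.le_succ d))
      · exact lt_trans hgt0 (hanti d (d + 1) (Nat.lt_succ_self d) le_rfl)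
      · intro i hi
        have h1 : G i = F (i + 1) - lam (d + 1) * F i := hFG i
        have h2 : F i = 0 := hzero i (Nat.lt_succ_of_lt hi)
        have h3 : F (i + 1) = 0 := hzero (i + 1) (Nat.succ_lt_succ hi)
        have h4 : G i = 0 := by rw [h1, h2, h3]; ring
        simpa [hG] using h4
    have hF0 : F 0 = 0 := hzero 0 (Nat.succ_pos d)
    have hrec : ∀ n, F (n + 1) = lam (d + 1) * F n + G n := by
      intro n; have := hFG n; linarith
    have hFnonneg : ∀ n, 0 ≤ F n := by
      intro n
      induction n with
      | zero => rw [hF0]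
      | succ m ihm =>
        rw [hrec m]
        have := (hGres m).1
        nlinarith
    have hclaim : ∀ n, (1 - lam (d + 1)) * F n ≤ G n := by
      intro n
      induction n with
      | zero => rw [hF0]; simpa using (hGres 0).1
      | succ m ihm =>
        have h1 := (hGres m).1
        have h2 := (hGres m).2
        rw [hrec m]
        nlinarith
    intro n
    refine ⟨hFnonneg n, ?_⟩
    have h1 := hclaim n
    have h2 := hrec n
    have : (F (n + 1) : ℝ) - F n = G n - (1 - lam (d + 1)) * F n := by
      rw [h2]; ring
    have hle : F n ≤ F (n + 1) := by linarith
    simpa [hF] using hle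

/-- let `1 = λ_0 > λ_1 > … > λ_d > 0` and `Γ_n = ∑_{i=0}^d A_i λ_i^n` with
`A_0 ≥ 0`. If `Γ_i = 0` for `0 ≤ i ≤ d-1`, then `n ↦ Γ_n` is increasing and `Γ_n ≤ A_0`. -/
theorem stmt12 (d : ℕ) (A lam : ℕ → ℝ)
    (hA0 : 0 ≤ A 0) (hlam0 : lam 0 = 1)
    (hanti : ∀ i j, i < j → j ≤ d → lam j < lam i)
    (hpos : 0 < lam d)
    (Γ : ℕ → ℝ)
    (hΓ : ∀ n, Γ n = ∑ i ∈ Finset.range (d + 1), A i * lam i ^ n)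
    (hzero : ∀ i < d, Γ i = 0) :
    (∀ n, Γ n ≤ Γ (n + 1)) ∧ (∀ n, Γ n ≤ A 0) := by
  have key := stmt12_aux d A lam hA0 hlam0 hanti hpos
    (fun i hi => by rw [← hΓ i]; exact hzero i hi)
  have hinc : ∀ n, Γ n ≤ Γ (n + 1) := by
    intro n; rw [hΓ n, hΓ (n + 1)]; exact (key n).2
  refine ⟨hinc, ?_⟩
  have hmono : Monotone Γ := monotone_nat_of_le_succ hinc
  -- Γ tends to A 0
  have hlim : Filter.Tendsto Γ Filter.atTop (nhds (A 0)) := by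
    have h1 : Filter.Tendsto (fun n => ∑ i ∈ Finset.range (d + 1), A i * lam i ^ n)
        Filter.atTop (nhds (∑ i ∈ Finset.range (d + 1), if i = 0 then A 0 else 0)) := by
      apply tendsto_finset_sum
      intro i hi
      rcases Nat.eq_zero_or_pos i with h0 | h0
      · subst h0
        simp only [if_pos rfl, hlam0, one_pow, mul_one]
        exact tendsto_const_nhds
      · rw [if_neg (Nat.pos_iff_ne_zero.mp h0)]
        have hi1 : lam i < 1 := by
          have := hanti 0 i h0 (Nat.lt_succ_iff.mp (Finset.mem_range.mp hi))
          rwa [hlam0] at this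
        have hi0 : 0 < lam i := by
          rcases lt_or_eq_of_le (Nat.lt_succ_iff.mp (Finset.mem_range.mp hi)) with h | h
          · exact lt_trans hpos (hanti i d h le_rfl)
          · rwa [h]
        have : Filter.Tendsto (fun n : ℕ => lam i ^ n) Filter.atTop (nhds 0) :=
          tendsto_pow_atTop_nhds_zero_of_lt_one (by linarith) hi1
        simpa using this.const_mul (A i)
    have h2 : (∑ i ∈ Finset.range (d + 1), if i = 0 then A 0 else (0 : ℝ)) = A 0 := by
      rw [Finset.sum_ite_eq' (Finset.range (d + 1)) 0 (fun _ => A 0)]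
      simp
    rw [h2] at h1
    exact h1.congr fun n => (hΓ n).symm
  intro n
  exact ge_of_tendsto hlim (Filter.eventually_atTop.mpr ⟨n, fun m hm => hmono hm⟩)
end

section
/- Let φ(t) = B_0 + Σ_{k=1}^{2d} B_k e^{-μ_k t} with 0 < μ_1 < μ_2 < … < μ_{2d}, B_0 > 0, B_{2i}B_{2i+1} < 0 and B_{2i+1}B_{2i+2} > 0 for all i. Then φ has at most d real zeros. -/
/-! A Descartes rule of signs for exponential sums: `∑ C_k e^{ν_k t}` with `ν` strictly decreasing
has at most as many real zeros as the coefficients `C_0, …, C_m` have sign changes. Induct on the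
number of sign changes: at a sign change between `C_{j-1}` and `C_j` pick `ρ` strictly between
`ν_j` and `ν_{j-1}`. Multiplying by `e^{-ρt}` keeps the zeros, and differentiating then multiplies
`C_k` by `ν_k - ρ`, which flips the signs from index `j` on and so removes that sign change, while
Rolle's theorem loses at most one zero. With exponents `0 > -μ_1 > ⋯ > -μ_{2d}` the coefficients
of `φ` have the sign pattern `+ - - + + - - ⋯`, which has `d` sign changes. -/

open Finset

theorem encard_zeros_le_of_encard_deriv_zeros_le {f : ℝ → ℝ} (hf : Continuous f) {n : ℕ}
    (h : {x | deriv f x = 0}.encard ≤ n) : {x | f x = 0}.encard ≤ n + 1 := by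
  obtain ⟨hfin, hcard⟩ := Set.encard_le_coe_iff_finite_ncard_le.1 h
  by_contra! hlt
  obtain ⟨u, hu, hucard⟩ := Set.exists_subset_encard_eq (Order.add_one_le_of_lt hlt)
  lift u to Finset ℝ using Set.finite_of_encard_eq_coe (k := n + 2) (by rw [hucard]; rfl)
  have interleaved : u.card ≤ hfin.toFinset.card + 1 :=
    card_le_of_interleaved fun x hx y hy hxy _ => by
      obtain ⟨z, hz, hz0⟩ := exists_deriv_eq_zero hxy hf.continuousOn ((hu hx).trans (hu hy).symm)
      exact ⟨z, by simpa using hz0, hz⟩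
  rw [Set.encard_coe_eq_coe_finsetCard] at hucard
  rw [← Set.ncard_eq_toFinset_card _ hfin] at interleaved
  have : u.card = n + 2 := by exact_mod_cast hucard
  omega

noncomputable def expSum (C ν : ℕ → ℝ) (m : ℕ) (t : ℝ) : ℝ :=
  ∑ k ∈ range (m + 1), C k * Real.exp (ν k * t)

namespace expSum

variable {C ν : ℕ → ℝ} {m : ℕ}

theorem hasDerivAt (t : ℝ) :
    HasDerivAt (expSum C ν m) (expSum (fun k => C k * ν k) ν m t) t := by
  unfold expSum
  refine HasDerivAt.fun_sum fun k _ => ?_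
  exact ((((hasDerivAt_id' t).const_mul (ν k)).exp).const_mul (C k)).congr_deriv (by ring)

theorem continuous : Continuous (expSum C ν m) := by
  unfold expSum
  fun_prop

theorem deriv_eq : deriv (expSum C ν m) = expSum (fun k => C k * ν k) ν m :=
  funext fun t => (hasDerivAt t).deriv

theorem exp_mul_shift (ρ t : ℝ) :
    Real.exp (ρ * t) * expSum C (fun k => ν k - ρ) m t = expSum C ν m t := by
  simp only [expSum, mul_sum]
  refine sum_congr rfl fun k _ => ?_
  rw [mul_left_comm, ← Real.exp_add]
  ring_nf

theorem zeros_shift (ρ : ℝ) :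
    {t | expSum C (fun k => ν k - ρ) m t = 0} = {t | expSum C ν m t = 0} := by
  ext t
  rw [Set.mem_ofPred_eq, Set.mem_ofPred_eq, ← exp_mul_shift (ν := ν) ρ t, mul_eq_zero,
    or_iff_right (Real.exp_ne_zero _)]

theorem const_mul (s : ℝ) (t : ℝ) : expSum (fun k => s * C k) ν m t = s * expSum C ν m t := by
  simp only [expSum, mul_sum, mul_assoc]

theorem pos (hC : ∀ k ≤ m, 0 < C k) (t : ℝ) : 0 < expSum C ν m t :=
  sum_pos (fun k hk => mul_pos (hC k (Nat.lt_succ_iff.1 (mem_range.1 hk))) (Real.exp_pos _))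
    nonempty_range_add_one

theorem encard_zeros_le_succ_of_shift (ρ : ℝ) {n : ℕ}
    (h : {t | expSum (fun k => C k * (ν k - ρ)) (fun k => ν k - ρ) m t = 0}.encard ≤ n) :
    {t | expSum C ν m t = 0}.encard ≤ n + 1 := by
  rw [← zeros_shift ρ]
  exact encard_zeros_le_of_encard_deriv_zeros_le continuous (by rwa [deriv_eq])

theorem exists_shift_deriv_sign_changes_pred {c : ℕ → ℕ} (hν : StrictAntiOn ν (Set.Iic m))
    (hc : Monotone c) (hsign : ∀ k ≤ m, 0 < (-1) ^ c k * C k) {n : ℕ} (hn : c 0 + n < c m) :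
    ∃ (ρ : ℝ) (c' : ℕ → ℕ), Monotone c' ∧ (∀ k ≤ m, 0 < (-1) ^ c' k * (C k * (ν k - ρ))) ∧
      c' 0 = c 0 ∧ c' m = c m - 1 := by
  have hex : ∃ j, c 0 + n < c j := ⟨m, hn⟩
  obtain ⟨hj, hjm, hbefore⟩ : c 0 + n < c (Nat.find hex) ∧ Nat.find hex ≤ m ∧
      ∀ k < Nat.find hex, c k ≤ c 0 + n :=
    ⟨Nat.find_spec hex, Nat.find_min' hex hn, fun k hk => not_lt.1 (Nat.find_min hex hk)⟩
  set j := Nat.find hex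
  have hj0 : 0 < j := Nat.pos_of_ne_zero fun h => by rw [h] at hj; omega
  have hνj : ν j < ν (j - 1) := hν (by simp; omega) (by simp; omega) (by omega)
  refine ⟨(ν (j - 1) + ν j) / 2, fun k => if k < j then c k else c k - 1, ?_, ?_, ?_, ?_⟩
  · intro a b hab
    dsimp only
    split_ifs with ha hb hb
    · exact hc hab
    · have := hbefore a ha
      have := hc (not_lt.1 hb)
      omega
    · omega
    · exact Nat.sub_le_sub_right (hc hab) 1
  · intro k hk
    dsimp only
    split_ifs with hkj
    · have : ν (j - 1) ≤ ν k := hν.antitoneOn (by simp; omega) (by simp; omega) (by omega)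
      have := mul_pos (hsign k hk) (show 0 < ν k - (ν (j - 1) + ν j) / 2 by linarith)
      linear_combination this
    · have : ν k ≤ ν j := hν.antitoneOn (by simp; omega) (by simp; omega) (by omega)
      obtain ⟨e, he⟩ : ∃ e, c k = e + 1 := ⟨c k - 1, by have := hc (not_lt.1 hkj); omega⟩
      have := mul_pos (hsign k hk) (show 0 < (ν (j - 1) + ν j) / 2 - ν k by linarith)
      rw [he, pow_succ] at this
      rw [he, Nat.add_sub_cancel]
      linear_combination this
  · simp [hj0]
  · simp [show ¬ m < j by omega]

/-- `c k` counts the sign changes in `C 0, …, C k`. -/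
theorem encard_zeros_le_of_sign_changes {c : ℕ → ℕ} (hν : StrictAntiOn ν (Set.Iic m))
    (hc : Monotone c) (hsign : ∀ k ≤ m, 0 < (-1) ^ c k * C k) {n : ℕ} (hn : c m ≤ c 0 + n) :
    {t | expSum C ν m t = 0}.encard ≤ n := by
  induction n generalizing C ν c with
  | zero =>
    have hconst : ∀ k ≤ m, c k = c 0 := fun k hk => le_antisymm ((hc hk).trans hn) (hc k.zero_le)
    suffices {t | expSum C ν m t = 0} = ∅ by simp [this]
    refine Set.eq_empty_of_forall_notMem fun t ht => ?_
    have := pos (C := fun k => (-1) ^ c 0 * C k) (ν := ν) (fun k hk => hconst k hk ▸ hsign k hk) t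
    rw [const_mul, show expSum C ν m t = 0 from ht, mul_zero] at this
    exact lt_irrefl _ this
  | succ n ih =>
    by_cases hle : c m ≤ c 0 + n
    · exact (ih hν hc hsign hle).trans (by norm_cast; omega)
    obtain ⟨ρ, c', hc', hsign', hc'0, hc'm⟩ :=
      exists_shift_deriv_sign_changes_pred hν hc hsign (not_le.1 hle)
    refine encard_zeros_le_succ_of_shift ρ (ih (fun a ha b hb hab => ?_) hc' hsign' (by omega))
    simpa using hν ha hb hab

end expSum

theorem neg_one_pow_succ_div_two_mul_pos {m : ℕ} {B : ℕ → ℝ} (hB0 : 0 < B 0)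
    (hsign1 : ∀ i, 2 * i + 1 ≤ m → B (2 * i) * B (2 * i + 1) < 0)
    (hsign2 : ∀ i, 2 * i + 2 ≤ m → B (2 * i + 1) * B (2 * i + 2) > 0) :
    ∀ k ≤ m, 0 < (-1) ^ ((k + 1) / 2) * B k := by
  intro k hk
  induction k with
  | zero => simpa using hB0
  | succ k ih =>
    have hpos := ih (by omega)
    have hsq : ((-1 : ℝ) ^ ((k + 1) / 2)) ^ 2 = 1 := by rw [← pow_mul, pow_mul']; simp
    refine (pos_iff_pos_of_mul_pos ?_).1 hpos
    obtain ⟨i, rfl | rfl⟩ := Nat.even_or_odd' k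
    · have := hsign1 i hk
      rw [show (2 * i + 1 + 1) / 2 = (2 * i + 1) / 2 + 1 by omega, pow_succ]
      nlinarith
    · have := hsign2 i hk
      rw [show (2 * i + 1 + 1 + 1) / 2 = (2 * i + 1 + 1) / 2 by omega]
      nlinarith

/-- let `φ(t) = B_0 + ∑_{k=1}^{2d} B_k e^{-μ_k t}` with
`0 < μ_1 < … < μ_{2d}`, `B_0 > 0`, `B_{2i} B_{2i+1} < 0` and `B_{2i+1} B_{2i+2} > 0`
for all admissible `i`.  Then `φ` has at most `d` real zeros. -/
theorem stmt14 (d : ℕ) (μ B : ℕ → ℝ)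
    (hμ1 : 0 < μ 1)
    (hμmono : ∀ i j, 1 ≤ i → i < j → j ≤ 2 * d → μ i < μ j)
    (hB0 : 0 < B 0)
    (hsign1 : ∀ i, 2 * i + 1 ≤ 2 * d → B (2 * i) * B (2 * i + 1) < 0)
    (hsign2 : ∀ i, 2 * i + 2 ≤ 2 * d → B (2 * i + 1) * B (2 * i + 2) > 0) :
    ∃ s : Finset ℝ, s.card ≤ d ∧
      ∀ t : ℝ, B 0 + (∑ k ∈ Finset.Icc 1 (2 * d), B k * Real.exp (-(μ k) * t)) = 0 →
        t ∈ s := by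
  set ν : ℕ → ℝ := Function.update (fun k => -μ k) 0 0
  have hν : StrictAntiOn ν (Set.Iic (2 * d)) := by
    intro a ha b hb hab
    have hb0 : b ≠ 0 := by omega
    rcases Nat.eq_zero_or_pos a with rfl | ha0
    · have : μ 1 ≤ μ b := (eq_or_lt_of_le (show 1 ≤ b by omega)).elim
        (fun h => h ▸ le_rfl) fun h => (hμmono 1 b le_rfl h hb).le
      simp [ν, hb0]
      linarith
    · simpa [ν, hb0, ha0.ne'] using hμmono a b ha0 hab hb
  have hsum : ∀ t, expSum B ν (2 * d) t =
      B 0 + ∑ k ∈ Finset.Icc 1 (2 * d), B k * Real.exp (-(μ k) * t) := by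
    intro t
    rw [expSum, range_eq_Ico, sum_eq_sum_Ico_succ_bot (by omega), Ico_add_one_right_eq_Icc]
    refine congrArg₂ (· + ·) (by simp [ν]) (sum_congr rfl fun k hk => ?_)
    simp [ν, show k ≠ 0 by grind]
  obtain ⟨hfin, hcard⟩ := Set.encard_le_coe_iff_finite_ncard_le.1 <|
    expSum.encard_zeros_le_of_sign_changes hν (fun a b hab => Nat.div_le_div_right (by omega))
      (neg_one_pow_succ_div_two_mul_pos hB0 hsign1 hsign2) (n := d) (by omega)
  refine ⟨hfin.toFinset, by rwa [← Set.ncard_eq_toFinset_card _ hfin], fun t ht => ?_⟩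
  simpa [hsum] using ht
end

section
/- For the asymmetric continuous-time Ehrenfest process started at 0, the smallest halting state is x* = ⌈λN/(λ+μ)⌉: for all t ≥ 0, (1 + (λ/μ)e^{-t(λ+μ)})^{N-x}(1 - e^{-t(λ+μ)})^{x} ≤ 1 if and only if x ≥ λN/(λ+μ) (for x in {0,…,N}). -/
/-!
Write `s = e^{-t(λ+μ)}`, which runs through `(0, 1]` as `t` runs through `[0, ∞)`, and
`a = λ/μ`. The ratio becomes `f(s) = (1 + a s)^{N-x} (1 - s)^x`, with `f(0) = 1`.
Since `1 + y ≤ e^y`, `f(s) ≤ e^{s (a(N-x) - x)}`, which is `≤ 1` when `a(N-x) ≤ x`.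
Conversely `f'(0) = a(N-x) - x`, so if this is positive then `f > 1` just to the right of `0`.
-/

open Real Set Filter Topology

theorem HasDerivAt.eventually_nhdsGT_lt {f : ℝ → ℝ} {f' x : ℝ} (hf : HasDerivAt f f' x)
    (hf' : 0 < f') : ∀ᶠ y in 𝓝[>] x, f x < f y := by
  filter_upwards [(hasDerivAt_iff_tendsto_slope_left_right.1 hf).2.eventually (lt_mem_nhds hf'),
    self_mem_nhdsWithin] with y hslope hxy
  exact (slope_pos_iff hxy).1 hslope

theorem forall_nonneg_exp_neg_mul_iff {c : ℝ} (hc : 0 < c) (P : ℝ → Prop) :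
    (∀ t : ℝ, 0 ≤ t → P (exp (-(t * c)))) ↔ ∀ s ∈ Ioc (0 : ℝ) 1, P s := by
  refine ⟨fun h s ⟨hs₀, hs₁⟩ ↦ ?_, fun h t ht ↦ h _ ⟨exp_pos _, ?_⟩⟩
  · have ht : 0 ≤ -log s / c := div_nonneg (neg_nonneg.2 (log_nonpos hs₀.le hs₁)) hc.le
    have hlog : -(-log s / c * c) = log s := by field_simp
    simpa only [hlog, exp_log hs₀] using h _ ht
  · exact exp_le_one_iff.2 (neg_nonpos.2 (mul_nonneg ht hc.le))

section Ratio

variable {a s : ℝ} {n x : ℕ}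

theorem one_add_mul_pow_mul_one_sub_pow_le_one (ha : 0 ≤ a) (hs₀ : 0 ≤ s) (hs₁ : s ≤ 1)
    (hanx : a * n ≤ x) : (1 + a * s) ^ n * (1 - s) ^ x ≤ 1 :=
  calc (1 + a * s) ^ n * (1 - s) ^ x ≤ exp (a * s) ^ n * exp (-s) ^ x := by
        gcongr
        · linarith [add_one_le_exp (a * s)]
        · linarith [add_one_le_exp (-s)]
    _ = exp (s * (a * n - x)) := by rw [← exp_nat_mul, ← exp_nat_mul, ← exp_add]; ring_nf
    _ ≤ 1 := exp_le_one_iff.2 (mul_nonpos_of_nonneg_of_nonpos hs₀ (by linarith))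

theorem hasDerivAt_one_add_mul_pow_mul_one_sub_pow_zero :
    HasDerivAt (fun s ↦ (1 + a * s) ^ n * (1 - s) ^ x) (a * n - x) 0 := by
  have h₁ := (((hasDerivAt_id' (0 : ℝ)).const_mul a).const_add 1).fun_pow n
  have h₂ := ((hasDerivAt_id' (0 : ℝ)).const_sub 1).fun_pow x
  exact (h₁.fun_mul h₂).congr_deriv (by simp; ring)

theorem exists_one_lt_one_add_mul_pow_mul_one_sub_pow (hanx : (x : ℝ) < a * n) :
    ∃ s ∈ Ioo (0 : ℝ) 1, 1 < (1 + a * s) ^ n * (1 - s) ^ x := by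
  have hgrow := hasDerivAt_one_add_mul_pow_mul_one_sub_pow_zero.eventually_nhdsGT_lt
    (sub_pos.2 hanx)
  obtain ⟨s, hgt, hs⟩ := (hgrow.and (Ioo_mem_nhdsGT one_pos)).exists
  exact ⟨s, hs, by simpa using hgt⟩

theorem forall_one_add_mul_pow_mul_one_sub_pow_le_one_iff (ha : 0 ≤ a) :
    (∀ s ∈ Ioc (0 : ℝ) 1, (1 + a * s) ^ n * (1 - s) ^ x ≤ 1) ↔ a * n ≤ x := by
  refine ⟨fun h ↦ ?_, fun hanx s hs ↦
    one_add_mul_pow_mul_one_sub_pow_le_one ha hs.1.le hs.2 hanx⟩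
  by_contra! hanx
  obtain ⟨s, hs, hgt⟩ := exists_one_lt_one_add_mul_pow_mul_one_sub_pow hanx
  exact (h s (Ioo_subset_Ioc_self hs)).not_gt hgt

end Ratio

/-- for the asymmetric continuous-time Ehrenfest process started at `0`,
whose distribution satisfies
`P_0(X_t = x)/π(x) = (1 + (λ/μ) e^{-t(λ+μ)})^{N-x} (1 - e^{-t(λ+μ)})^x`,
a state `x ∈ {0,…,N}` is halting (i.e. the above ratio is `≤ 1` for all `t ≥ 0`)
if and only if `x ≥ λN/(λ+μ)`; hence the smallest halting state is `⌈λN/(λ+μ)⌉`. -/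
theorem stmt17 (N : ℕ) (lam mu : ℝ) (hlam : 0 < lam) (hmu : 0 < mu)
    (x : ℕ) (hx : x ≤ N) :
    (∀ t : ℝ, 0 ≤ t →
      (1 + (lam / mu) * Real.exp (-(t * (lam + mu)))) ^ (N - x)
        * (1 - Real.exp (-(t * (lam + mu)))) ^ x ≤ 1)
    ↔ lam * N / (lam + mu) ≤ (x : ℝ) := by
  have hlm : 0 < lam + mu := by positivity
  rw [forall_nonneg_exp_neg_mul_iff hlm
      (fun s ↦ (1 + lam / mu * s) ^ (N - x) * (1 - s) ^ x ≤ 1),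
    forall_one_add_mul_pow_mul_one_sub_pow_le_one_iff (by positivity), Nat.cast_sub hx,
    div_mul_eq_mul_div, div_le_iff₀ hmu, div_le_iff₀ hlm]
  constructor <;> intro h <;> linarith
end

section
/- Let (φ_k)_{0≤k≤N} be the orthogonal polynomials of an irreducible birth-and-death chain on {0,…,N}, defined by φ_0 = 1 and φ_k(t) = (1/(p_0⋯p_{k-1})) det(t I_k - P_{k-1}), where P_{k-1} is the restriction of the transition matrix P to {0,…,k-1}. If 1 = λ_0 > λ_1 > … > λ_N are the eigenvalues of P, then (-1)^k φ_N(λ_k) > 0 for all 0 ≤ k ≤ N. -/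
/-!
Conjugating `P` by a positive diagonal matrix turns it into a symmetric tridiagonal matrix `J`
with the same spectrum and the same leading principal minors. If `u` is a unit eigenvector of
`J` for `λ_k`, the adjugate of `λ_k - J` is `∏_{j ≠ k} (λ_k - λ_j) • u uᵀ`. Its last diagonal
entry is `det (λ_k - J_{N-1}) = p_0 ⋯ p_{N-1} φ_N(λ_k)`, so `φ_N(λ_k)` has the sign `(-1)^k` of
the product as soon as `u_N ≠ 0`. And `u_N ≠ 0` because the corner entry `(N, 0)` of the
adjugate is, up to sign, the product of the subdiagonal entries of `J`, none of which vanish.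
-/

open Matrix Finset

lemma StrictAnti.neg_one_pow_mul_prod_erase_sub_pos {R : Type*} [CommRing R] [LinearOrder R]
    [IsStrictOrderedRing R] {n : ℕ} {f : Fin n → R} (hf : StrictAnti f) (k : Fin n) :
    0 < (-1) ^ (k : ℕ) * ∏ j ∈ univ.erase k, (f k - f j) := by
  have hsign : (-1 : R) ^ (k : ℕ) = ∏ j ∈ univ.erase k, if j < k then -1 else 1 := by
    rw [prod_ite, prod_const, prod_const, one_pow, mul_one, ← Fin.card_Iio k]
    congr 2
    ext j
    simp only [mem_filter, mem_erase, mem_univ, mem_Iio, and_true]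
    exact ⟨fun h => ⟨h.ne, h⟩, And.right⟩
  rw [hsign, ← prod_mul_distrib]
  refine prod_pos fun j hj => ?_
  rcases lt_or_gt_of_ne (mem_erase.mp hj).1 with h | h
  · rw [if_pos h]
    linarith [hf h]
  · rw [if_neg h.not_gt]
    linarith [hf h]

lemma Function.Injective.exists_equiv_comp_eq {ι α : Type*} [Finite ι] {f g : ι → α}
    (hf : Function.Injective f) (h : ∀ k, ∃ j, g j = f k) : ∃ σ : ι ≃ ι, ∀ k, g (σ k) = f k := by
  choose τ hτ using h
  have hτ_inj : Function.Injective τ := fun a b hab => hf (by rw [← hτ a, ← hτ b, hab])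
  exact ⟨Equiv.ofBijective τ (Finite.injective_iff_bijective.mp hτ_inj), hτ⟩

lemma Fin.exists_pos_succ_eq_mul {n : ℕ} (w : Fin n → ℝ) (hw : ∀ i, 0 < w i) :
    ∃ d : Fin (n + 1) → ℝ, (∀ i, 0 < d i) ∧ ∀ i : Fin n, d i.succ = d i.castSucc * w i :=
  ⟨Fin.induction 1 fun i x => x * w i,
    fun i => Fin.induction _root_.one_pos (fun i hi => mul_pos hi (hw i)) i,
    fun i => Fin.induction_succ _ _ i⟩

namespace Matrix

section DiagConj

variable {n R : Type*} [Field R]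

/-- `(diagonal d)⁻¹ * M * diagonal d`, written entrywise so that it commutes with `submatrix`. -/
def diagConj (d : n → R) (M : Matrix n n R) : Matrix n n R :=
  of fun i j => (d i)⁻¹ * M i j * d j

lemma diagConj_submatrix {m : Type*} (d : n → R) (M : Matrix n n R) (e : m → n) :
    (diagConj d M).submatrix e e = diagConj (d ∘ e) (M.submatrix e e) :=
  rfl

variable [Fintype n] [DecidableEq n]

lemma exists_units_diagConj_eq {d : n → R} (hd : ∀ i, d i ≠ 0) (M : Matrix n n R) :
    ∃ u : (Matrix n n R)ˣ, diagConj d M = (↑u⁻¹ : Matrix n n R) * M * (u : Matrix n n R) := by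
  refine ⟨⟨diagonal d, diagonal d⁻¹, ?_, ?_⟩, ?_⟩
  · simp [diagonal_mul_diagonal, hd]
  · simp [diagonal_mul_diagonal, hd]
  · ext i j
    simp [diagConj, diagonal_mul, mul_diagonal]

lemma det_smul_one_sub_diagConj {d : n → R} (hd : ∀ i, d i ≠ 0) (M : Matrix n n R) (t : R) :
    det (t • 1 - diagConj d M) = det (t • 1 - M) := by
  obtain ⟨u, hu⟩ := exists_units_diagConj_eq hd M
  rw [hu, ← det_units_conj' u (t • 1 - M), Matrix.mul_sub, Matrix.sub_mul, Matrix.mul_smul,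
    Matrix.smul_mul, mul_one, Units.inv_mul]

lemma spectrum_diagConj {d : n → R} (hd : ∀ i, d i ≠ 0) (M : Matrix n n R) :
    spectrum R (diagConj d M) = spectrum R M := by
  obtain ⟨u, hu⟩ := exists_units_diagConj_eq hd M
  rw [hu, spectrum.units_conjugate']

end DiagConj

/-- The scaling is `d (i + 1) = d i * √(M (i+1) i / M i (i+1))`. -/
lemma exists_pos_diagConj_isSymm {n : ℕ} (M : Matrix (Fin (n + 1)) (Fin (n + 1)) ℝ)
    (htri : ∀ i j : Fin (n + 1), 1 < ((i : ℤ) - (j : ℤ)).natAbs → M i j = 0)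
    (hp : ∀ i : Fin n, 0 < M i.castSucc i.succ) (hq : ∀ i : Fin n, 0 < M i.succ i.castSucc) :
    ∃ d : Fin (n + 1) → ℝ, (∀ i, 0 < d i) ∧ (diagConj d M).IsSymm := by
  have hratio : ∀ i : Fin n, 0 < M i.succ i.castSucc / M i.castSucc i.succ :=
    fun i => div_pos (hq i) (hp i)
  obtain ⟨d, hd, hsucc⟩ := Fin.exists_pos_succ_eq_mul
    (fun i => √(M i.succ i.castSucc / M i.castSucc i.succ)) fun i => Real.sqrt_pos.mpr (hratio i)
  refine ⟨d, hd, IsSymm.ext fun i j => ?_⟩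
  have hadjacent : ∀ i : Fin n,
      diagConj d M i.succ i.castSucc = diagConj d M i.castSucc i.succ := by
    intro i
    have := (hd i.castSucc).ne'
    have := (Real.sqrt_pos.mpr (hratio i)).ne'
    simp only [diagConj, of_apply, hsucc]
    field_simp
    rw [Real.sq_sqrt (hratio i).le, mul_div_cancel₀ _ (hp i).ne']
  wlog hij : (i : ℕ) ≤ j generalizing i j
  · exact (this j i (by omega)).symm
  obtain h | h | h : (j : ℕ) = i ∨ (j : ℕ) = i + 1 ∨ (i : ℕ) + 2 ≤ j := by omega
  · rw [Fin.ext h]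
  · obtain ⟨i', rfl, rfl⟩ : ∃ i' : Fin n, i = i'.castSucc ∧ j = i'.succ :=
      ⟨⟨i, by omega⟩, Fin.ext rfl, Fin.ext (by simp [h])⟩
    exact hadjacent i'
  · simp only [diagConj, of_apply, htri i j (by omega), htri j i (by omega), mul_zero, zero_mul]

section FinSucc

variable {R : Type*} [CommRing R] {n : ℕ}

lemma adjugate_last_last (M : Matrix (Fin (n + 1)) (Fin (n + 1)) R) :
    adjugate M (Fin.last n) (Fin.last n) = det (M.submatrix Fin.castSucc Fin.castSucc) := by
  rw [adjugate_fin_succ_eq_det_submatrix, Fin.succAbove_last, ← two_mul, pow_mul, neg_one_sq,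
    one_pow, one_mul]

lemma adjugate_last_zero_eq_prod (M : Matrix (Fin (n + 1)) (Fin (n + 1)) R)
    (hM : ∀ i j : Fin n, j < i → M i.succ j.castSucc = 0) :
    adjugate M (Fin.last n) 0 = (-1) ^ n * ∏ i : Fin n, M i.succ i.castSucc := by
  have hT : (M.submatrix Fin.succ Fin.castSucc).IsUpperTriangular := fun _ _ hij => hM _ _ hij
  rw [adjugate_fin_succ_eq_det_submatrix, Fin.succAbove_zero, Fin.succAbove_last,
    det_of_isUpperTriangular hT]
  simp

end FinSucc

lemma adjugate_unitary_conj {n R : Type*} [Fintype n] [DecidableEq n] [CommRing R] [StarRing R]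
    {U : Matrix n n R} (hU : U ∈ unitary (Matrix n n R)) (M : Matrix n n R) :
    adjugate (U * M * star U) = U * adjugate M * star U := by
  have hadj : ∀ V ∈ unitary (Matrix n n R), adjugate V = det V • star V := fun V hV => by
    calc adjugate V = adjugate V * V * star V := by
          rw [mul_assoc, Unitary.mul_star_self_of_mem hV, mul_one]
      _ = _ := by rw [adjugate_mul, smul_mul, one_mul]
  have hdet : det (star U) * det U = 1 := by
    rw [← det_mul, Unitary.star_mul_self_of_mem hU, det_one]
  rw [adjugate_mul_distrib, adjugate_mul_distrib, hadj _ (Unitary.star_mem hU), hadj U hU,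
    star_star]
  simp only [Matrix.smul_mul, Matrix.mul_smul, smul_smul, mul_comm (det U), hdet, one_smul,
    mul_assoc]

namespace IsHermitian

variable {𝕜 n : Type*} [RCLike 𝕜] [Fintype n] [DecidableEq n] {A : Matrix n n 𝕜}

lemma adjugate_smul_one_sub (hA : A.IsHermitian) (t : 𝕜) :
    Matrix.adjugate (t • 1 - A) = (hA.eigenvectorUnitary : Matrix n n 𝕜) *
      diagonal (fun j => ∏ i ∈ univ.erase j, (t - hA.eigenvalues i)) *
      star (hA.eigenvectorUnitary : Matrix n n 𝕜) := by
  have hsub : t • 1 - A = Unitary.conjStarAlgAut 𝕜 _ hA.eigenvectorUnitary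
      (diagonal fun j => t - hA.eigenvalues j) := by
    conv_lhs => rw [hA.spectral_theorem]
    rw [← map_one (Unitary.conjStarAlgAut 𝕜 _ hA.eigenvectorUnitary), ← map_smul, ← map_sub,
      smul_one_eq_diagonal, diagonal_sub]
    rfl
  rw [hsub, Unitary.conjStarAlgAut_apply, adjugate_unitary_conj hA.eigenvectorUnitary.2,
    adjugate_diagonal]

lemma adjugate_smul_one_sub_apply_of_eigenvalues_eq (hA : A.IsHermitian) {t : 𝕜} {j : n}
    (hj : (hA.eigenvalues j : 𝕜) = t) (a b : n) :
    Matrix.adjugate (t • 1 - A) a b = (∏ i ∈ univ.erase j, (t - hA.eigenvalues i)) *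
      hA.eigenvectorUnitary a j * star (hA.eigenvectorUnitary b j) := by
  rw [hA.adjugate_smul_one_sub, mul_apply, Fintype.sum_eq_single j]
  · rw [mul_diagonal, star_apply]
    ring
  · intro i hi
    rw [mul_diagonal, prod_eq_zero (mem_erase.mpr ⟨Ne.symm hi, mem_univ j⟩) (by rw [hj, sub_self])]
    simp

end IsHermitian

lemma IsSymm.neg_one_pow_mul_det_smul_one_sub_submatrix_pos {n : ℕ}
    {A : Matrix (Fin (n + 1)) (Fin (n + 1)) ℝ} (hA : A.IsSymm)
    (hHess : ∀ i j : Fin n, j < i → A i.succ j.castSucc = 0)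
    (hsub : ∀ i : Fin n, A i.succ i.castSucc ≠ 0)
    {lam : Fin (n + 1) → ℝ} (hlam : StrictAnti lam) (heig : ∀ k, lam k ∈ spectrum ℝ A)
    (k : Fin (n + 1)) :
    0 < (-1) ^ (k : ℕ) * det (lam k • 1 - A.submatrix Fin.castSucc Fin.castSucc) := by
  have hH : A.IsHermitian := isHermitian_iff_isSymm.mpr hA
  obtain ⟨σ, hσ⟩ := hlam.injective.exists_equiv_comp_eq fun k => by
    simpa [hH.spectrum_real_eq_range_eigenvalues] using heig k
  have hadj := hH.adjugate_smul_one_sub_apply_of_eigenvalues_eq (hσ k)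
  simp only [RCLike.ofReal_real_eq_id, id, star_trivial] at hadj
  set U : Matrix (Fin (n + 1)) (Fin (n + 1)) ℝ := ↑hH.eigenvectorUnitary
  have hprod : ∏ i ∈ univ.erase (σ k), (lam k - hH.eigenvalues i)
      = ∏ j ∈ univ.erase k, (lam k - lam j) :=
    (prod_equiv σ (fun j => by simp [σ.injective.ne_iff]) (fun j _ => by rw [hσ])).symm
  have hU : U (Fin.last n) (σ k) ≠ 0 := by
    intro h0
    have hcorner := adjugate_last_zero_eq_prod (lam k • 1 - A) fun i j hji => by
      simp [one_apply_ne (Fin.castSucc_lt_succ_iff.mpr hji.le).ne', hHess i j hji]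
    rw [hadj, h0, mul_zero, zero_mul] at hcorner
    refine mul_ne_zero (pow_ne_zero _ (neg_ne_zero.mpr one_ne_zero))
      (prod_ne_zero_iff.mpr fun i _ => ?_) hcorner.symm
    simpa [one_apply_ne (Fin.castSucc_lt_succ (i := i)).ne'] using hsub i
  have hdet : det (lam k • 1 - A.submatrix Fin.castSucc Fin.castSucc)
      = (∏ j ∈ univ.erase k, (lam k - lam j)) * U (Fin.last n) (σ k) ^ 2 := by
    have hsubm : (lam k • 1 - A).submatrix Fin.castSucc Fin.castSucc
        = lam k • 1 - A.submatrix Fin.castSucc Fin.castSucc := by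
      rw [← submatrix_one (α := ℝ) _ (Fin.castSucc_injective n)]
      rfl
    rw [← hsubm, ← adjugate_last_last, hadj, hprod]
    ring
  rw [hdet, ← mul_assoc]
  exact mul_pos (hlam.neg_one_pow_mul_prod_erase_sub_pos k) (pow_two_pos_of_ne_zero hU)

end Matrix

theorem stmt19_general (N : ℕ) (P : Matrix (Fin (N + 1)) (Fin (N + 1)) ℝ)
    (htri : ∀ x y : Fin (N + 1), 1 < ((x : ℤ) - (y : ℤ)).natAbs → P x y = 0)
    (hp : ∀ i : Fin N, 0 < P i.castSucc i.succ)
    (hq : ∀ i : Fin N, 0 < P i.succ i.castSucc)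
    (lam : Fin (N + 1) → ℝ)
    (hanti : StrictAnti lam)
    (heig : ∀ k, lam k ∈ spectrum ℝ P)
    (φN : ℝ → ℝ)
    (hφ : ∀ t : ℝ, φN t = (∏ i : Fin N, P i.castSucc i.succ)⁻¹
        * (t • (1 : Matrix (Fin N) (Fin N) ℝ)
            - P.submatrix Fin.castSucc Fin.castSucc).det) :
    ∀ k : Fin (N + 1), 0 < (-1 : ℝ) ^ (k : ℕ) * φN (lam k) := by
  intro k
  obtain ⟨d, hd, hsymm⟩ := exists_pos_diagConj_isSymm P htri hp hq
  have hd0 : ∀ i, d i ≠ 0 := fun i => (hd i).ne'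
  have hJ := hsymm.neg_one_pow_mul_det_smul_one_sub_submatrix_pos
    (fun i j hji => by simp [diagConj, htri i.succ j.castSucc (by simp; omega)])
    (fun i => by simp [diagConj, hd0, (hq i).ne'])
    hanti (fun k => (spectrum_diagConj hd0 P).symm ▸ heig k) k
  rw [diagConj_submatrix, det_smul_one_sub_diagConj (d := d ∘ Fin.castSucc) fun _ => hd0 _] at hJ
  rw [hφ, mul_left_comm]
  exact mul_pos (inv_pos.mpr (prod_pos fun i _ => hp i)) hJ

/-- let `(φ_k)` be the orthogonal polynomials of an irreducible
birth-and-death chain on `{0,…,N}`, with `φ_N(t) = (p_0 ⋯ p_{N-1})⁻¹ det(t I_N - P_{N-1})`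
where `P_{N-1}` is the principal submatrix of `P` on `{0,…,N-1}`.
If `1 = λ_0 > λ_1 > … > λ_N` are the eigenvalues of `P`, then `(-1)^k φ_N(λ_k) > 0`
for all `0 ≤ k ≤ N`. -/
theorem stmt19 (N : ℕ) (P : Matrix (Fin (N + 1)) (Fin (N + 1)) ℝ)
    (hP0 : ∀ x y, 0 ≤ P x y) (hP1 : ∀ x, ∑ y, P x y = 1)
    (htri : ∀ x y : Fin (N + 1), 1 < ((x : ℤ) - (y : ℤ)).natAbs → P x y = 0)
    (hp : ∀ i : Fin N, 0 < P i.castSucc i.succ)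
    (hq : ∀ i : Fin N, 0 < P i.succ i.castSucc)
    (lam : Fin (N + 1) → ℝ)
    (hlam0 : lam 0 = 1)
    (hanti : StrictAnti lam)
    (heig : ∀ k, lam k ∈ spectrum ℝ P)
    (hall : ∀ μ ∈ spectrum ℝ P, ∃ k, lam k = μ)
    (φN : ℝ → ℝ)
    (hφ : ∀ t : ℝ, φN t = (∏ i : Fin N, P i.castSucc i.succ)⁻¹
        * (t • (1 : Matrix (Fin N) (Fin N) ℝ)
            - P.submatrix Fin.castSucc Fin.castSucc).det) :
    ∀ k : Fin (N + 1), 0 < (-1 : ℝ) ^ (k : ℕ) * φN (lam k) :=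
  stmt19_general N P htri hp hq lam hanti heig φN hφ
end
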